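/- arXiv:2310.13507 — 9 statements merged into one kernel-verified Lean document; each statement's English description precedes it below -/
import Mathlib

section
/- In a Matsumoto graph, for every infinite edge e and every vertex v, the root α_e assigned to e lies in the positive system R⁺_v. -/
/-- A (pre-)Matsumoto graph of degree `d` realized in the real vector space `M`:
vertices, oriented compact edges labelled by their root (ingoing at the target),
infinite edges attached to a single vertex and labelled by their root, and the
family of roots of the ingoing edges at each vertex. -/
structure MatsumotoGraph (d : ℕ) (M : Type*) [AddCommGroup M] [Module ℝ M] where
  Vx : Type*
  adj : Vx → Vx → M → Prop
  inf : Vx → M → Prop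
  basisAt : Vx → Fin d → M

namespace MatsumotoGraph

variable {d : ℕ} {M : Type*} [AddCommGroup M] [Module ℝ M] (G : MatsumotoGraph d M)

/-- The set of roots. -/
def R : Set M := {α | (∃ v v', G.adj v v' α) ∨ ∃ v, G.inf v α}

/-- Membership in the convex cone generated by the ingoing roots at `v`. -/
def inCone (v : G.Vx) (α : M) : Prop :=
  ∃ c : Fin d → ℝ, (∀ i, 0 ≤ c i) ∧ α = ∑ i, c i • G.basisAt v i

/-- The positive system at a vertex. -/
def pos (v : G.Vx) : Set M := {α ∈ G.R | G.inCone v α}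

/-- The negative system at a vertex. -/
def neg (v : G.Vx) : Set M := G.R \ G.pos v

/-- The convex cone generated by two vectors. -/
def cone2 (x y : M) : Set M := {z | ∃ a b : ℝ, 0 ≤ a ∧ 0 ≤ b ∧ z = a • x + b • y}

/-- The axioms of a Matsumoto graph. -/
structure Axioms : Prop where
  adj_symm : ∀ {v v' α}, G.adj v v' α → G.adj v' v (-α)
  basis_indep : ∀ v, LinearIndependent ℝ (G.basisAt v)
  basis_span : ∀ v, Submodule.span ℝ (Set.range (G.basisAt v)) = ⊤
  ingoing : ∀ v α, ((∃ v', G.adj v' v α) ∨ G.inf v α) ↔ ∃ i, α = G.basisAt v i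
  inf_noninv : ∀ v α, G.inf v α → -α ∉ G.R
  step : ∀ v v' α, G.adj v v' α → G.pos v' \ G.pos v = {α}
  posdet : ∀ v v', G.pos v = G.pos v' → v = v'
  connected : ∀ v v', Relation.ReflTransGen (fun a b => ∃ α, G.adj a b α) v v'

/-- Walks in the graph (along compact edges), recording the roots of the traversed edges. -/
inductive Walk : G.Vx → G.Vx → Type _
  | nil (v : G.Vx) : Walk v v
  | cons {v w u : G.Vx} (α : M) (h : G.adj v w α) (p : Walk w u) : Walk v u

variable {G}

def Walk.length : ∀ {v v' : G.Vx}, G.Walk v v' → ℕ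
  | _, _, .nil _ => 0
  | _, _, .cons _ _ p => p.length + 1

def Walk.roots : ∀ {v v' : G.Vx}, G.Walk v v' → List M
  | _, _, .nil _ => []
  | _, _, .cons α _ p => α :: p.roots

def Walk.append : ∀ {v w u : G.Vx}, G.Walk v w → G.Walk w u → G.Walk v u
  | _, _, _, .nil _, q => q
  | _, _, _, .cons α h p, q => .cons α h (p.append q)

variable (G)

/-- The graph distance between two vertices. -/
noncomputable def dist (v v' : G.Vx) : ℕ := sInf {n | ∃ p : G.Walk v v', p.length = n}

end MatsumotoGraph

/-- In a Matsumoto graph, the root of every infinite edge lies in every positive system. -/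
theorem infinite_edge_root_mem_pos {d : ℕ} {M : Type*} [AddCommGroup M] [Module ℝ M]
    (G : MatsumotoGraph d M) (hG : G.Axioms) (u : G.Vx) (α : M) (he : G.inf u α)
    (v : G.Vx) : α ∈ G.pos v := by
  have hR : α ∈ G.R := Or.inr ⟨u, he⟩
  have base : α ∈ G.pos u := by
    obtain ⟨i, hi⟩ := (hG.ingoing u α).mp (Or.inr he)
    refine ⟨hR, fun j => if j = i then 1 else 0, fun j => by positivity, ?_⟩
    simp [hi, ite_smul]
  have conn := hG.connected u v
  induction conn with
  | refl => exact base
  | @tail w x hstep hadj ih =>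
    obtain ⟨β, hβ⟩ := hadj
    by_contra hx
    have h2 := hG.step x w (-β) (hG.adj_symm hβ)
    have : α ∈ G.pos w \ G.pos x := ⟨ih, hx⟩
    rw [h2] at this
    have hαβ : α = -β := this
    exact hG.inf_noninv u α he (by rw [hαβ, neg_neg]; exact Or.inl ⟨w, x, hβ⟩)
end

section
/- In a Matsumoto graph, for every vertex v, every root α ∈ R satisfies α ∈ R⁺_v or -α ∈ R⁺_v (equivalently R ⊆ R⁺_v ∪ (-R⁺_v)). -/
lemma MatsumotoGraph.basis_inCone {d : ℕ} {M : Type*} [AddCommGroup M] [Module ℝ M]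
    (G : MatsumotoGraph d M) (v : G.Vx) (i : Fin d) : G.inCone v (G.basisAt v i) := by
  refine ⟨fun j => if j = i then 1 else 0, fun j => by positivity, ?_⟩
  simp [ite_smul]

lemma MatsumotoGraph.prop_step {d : ℕ} {M : Type*} [AddCommGroup M] [Module ℝ M]
    {G : MatsumotoGraph d M} (hG : G.Axioms) {w w' : G.Vx} {γ α : M} (h : G.adj w w' γ)
    (hα : α ∈ G.pos w ∨ -α ∈ G.pos w) : α ∈ G.pos w' ∨ -α ∈ G.pos w' := by
  have key : ∀ β : M, β ∈ G.pos w → β ∈ G.pos w' ∨ -β ∈ G.pos w' := by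
    intro β hβ
    by_cases hβ' : β ∈ G.pos w'
    · exact Or.inl hβ'
    · have h1 := hG.step w' w (-γ) (hG.adj_symm h)
      have hβγ : β = -γ := by
        have : β ∈ G.pos w \ G.pos w' := ⟨hβ, hβ'⟩
        rwa [h1, Set.mem_singleton_iff] at this
      have h2 := hG.step w w' γ h
      have : γ ∈ G.pos w' \ G.pos w := by rw [h2]; rfl
      right
      rw [hβγ, neg_neg]
      exact this.1
  rcases hα with hα | hα
  · exact key α hα
  · rcases key (-α) hα with h' | h'
    · exact Or.inr h'
    · rw [neg_neg] at h'
      exact Or.inl h'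

/-- In a Matsumoto graph, every root is positive or has positive negative at every vertex. -/
theorem root_pos_or_neg_pos {d : ℕ} {M : Type*} [AddCommGroup M] [Module ℝ M]
    (G : MatsumotoGraph d M) (hG : G.Axioms) (v : G.Vx) (α : M) (hα : α ∈ G.R) :
    α ∈ G.pos v ∨ -α ∈ G.pos v := by
  -- find a vertex where the statement holds
  obtain ⟨w, hw⟩ : ∃ w, α ∈ G.pos w ∨ -α ∈ G.pos w := by
    rcases hα with ⟨v₀, v₁, hadj⟩ | ⟨w, hinf⟩
    · obtain ⟨i, hi⟩ := (hG.ingoing v₁ α).mp (Or.inl ⟨v₀, hadj⟩)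
      exact ⟨v₁, Or.inl ⟨Or.inl ⟨v₀, v₁, hadj⟩, hi ▸ G.basis_inCone v₁ i⟩⟩
    · obtain ⟨i, hi⟩ := (hG.ingoing w α).mp (Or.inr hinf)
      exact ⟨w, Or.inl ⟨Or.inr ⟨w, hinf⟩, hi ▸ G.basis_inCone w i⟩⟩
  -- propagate along a walk from w to v
  have hconn := hG.connected w v
  induction hconn with
  | refl => exact hw
  | tail _ hbc ih =>
    obtain ⟨γ, hγ⟩ := hbc
    exact MatsumotoGraph.prop_step hG hγ ih
end

section
/- In a Matsumoto graph, if R⁺_v ⊆ R⁺_{v'} for two vertices v, v', then v = v'. -/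
set_option maxHeartbeats 1000000 in
/-- If one positive system is contained in another, the vertices coincide. -/
theorem eq_of_pos_subset {d : ℕ} {M : Type*} [AddCommGroup M] [Module ℝ M]
    (G : MatsumotoGraph d M) (hG : G.Axioms) (v v' : G.Vx)
    (h : G.pos v ⊆ G.pos v') : v = v' := by
  classical
  -- `α` and `-α` cannot both be positive at a vertex.
  have hopp : ∀ (x : G.Vx) (α : M), α ∈ G.pos x → -α ∈ G.pos x → α = 0 := by
    intro x α hα hnα
    obtain ⟨-, c, hc, hαc⟩ := hα
    obtain ⟨-, e, he, hαe⟩ := hnα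
    have hsum : ∑ i, (c i + e i) • G.basisAt x i = 0 := by
      have hz : (∑ i, c i • G.basisAt x i) + (∑ i, e i • G.basisAt x i) = 0 := by
        rw [← hαc, ← hαe]; simp
      simpa [add_smul, Finset.sum_add_distrib] using hz
    have hzero := Fintype.linearIndependent_iff.mp (hG.basis_indep x) (fun i => c i + e i) hsum
    have hc0 : ∀ i, c i = 0 := by
      intro i
      have h1 : c i + e i = 0 := hzero i
      linarith [hc i, he i]
    rw [hαc]
    simp [hc0]
  have key : ∀ u : G.Vx, Relation.ReflTransGen (fun a b => ∃ α, G.adj a b α) v u →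
      (G.pos u \ G.pos v).Finite ∧ (G.pos v \ G.pos u).Finite ∧
      (G.pos u \ G.pos v).ncard = (G.pos v \ G.pos u).ncard := by
    intro u hu
    induction hu with
    | refl => simp
    | @tail w b hwb hstep ih =>
      obtain ⟨α, hadj⟩ := hstep
      obtain ⟨hAfin, hBfin, hcard⟩ := ih
      have D1 : G.pos b \ G.pos w = {α} := hG.step _ _ _ hadj
      have D2 : G.pos w \ G.pos b = {-α} := hG.step _ _ _ (hG.adj_symm hadj)
      have hmem1 : α ∈ G.pos b \ G.pos w := by rw [D1]; exact rfl
      have hmem2 : -α ∈ G.pos w \ G.pos b := by rw [D2]; exact rfl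
      have hαb : α ∈ G.pos b := hmem1.1
      have hαw : α ∉ G.pos w := hmem1.2
      have hnw : -α ∈ G.pos w := hmem2.1
      have hnb : -α ∉ G.pos b := hmem2.2
      have hne : α ≠ -α := fun e => hαw (e ▸ hnw)
      have hmemb : ∀ β, β ∈ G.pos b ↔ β = α ∨ (β ∈ G.pos w ∧ β ≠ -α) := by
        intro β
        constructor
        · intro hβ
          by_cases hw : β ∈ G.pos w
          · exact Or.inr ⟨hw, fun e => hnb (e ▸ hβ)⟩
          · left
            have : β ∈ G.pos b \ G.pos w := ⟨hβ, hw⟩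
            rw [D1] at this
            exact this
        · rintro (rfl | ⟨hw, hne'⟩)
          · exact hαb
          · by_contra hb
            have : β ∈ G.pos w \ G.pos b := ⟨hw, hb⟩
            rw [D2] at this
            exact hne' this
      by_cases hav : α ∈ G.pos v
      · -- then `-α ∉ pos v`; both difference sets lose one element
        have hnv : -α ∉ G.pos v := by
          intro hn
          exact hne (by simp [hopp v α hav hn])
        have hA : G.pos b \ G.pos v = (G.pos w \ G.pos v) \ {-α} := by
          ext β
          have k1 : β = α → β ∈ G.pos v := fun e => e ▸ hav
          simp only [Set.mem_diff, Set.mem_singleton_iff, hmemb]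
          tauto
        have hB : G.pos v \ G.pos b = (G.pos v \ G.pos w) \ {α} := by
          ext β
          have k2 : β = -α → β ∈ G.pos v → False := fun e hv => hnv (e ▸ hv)
          simp only [Set.mem_diff, Set.mem_singleton_iff, hmemb]
          tauto
        have hmA : -α ∈ G.pos w \ G.pos v := ⟨hnw, hnv⟩
        have hmB : α ∈ G.pos v \ G.pos w := ⟨hav, hαw⟩
        refine ⟨by rw [hA]; exact hAfin.diff, by rw [hB]; exact hBfin.diff, ?_⟩
        rw [hA, hB, Set.ncard_diff_singleton_of_mem hmA,
          Set.ncard_diff_singleton_of_mem hmB, hcard]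
      · by_cases hnv : -α ∈ G.pos v
        · -- both difference sets gain one element
          have hA : G.pos b \ G.pos v = insert α (G.pos w \ G.pos v) := by
            ext β
            have k1 : β = -α → β ∈ G.pos v := fun e => e ▸ hnv
            have k2 : β = α → β ∈ G.pos v → False := fun e hv => hav (e ▸ hv)
            simp only [Set.mem_diff, Set.mem_insert_iff, hmemb]
            tauto
          have hB : G.pos v \ G.pos b = insert (-α) (G.pos v \ G.pos w) := by
            ext β
            have k1 : β = -α → β ∈ G.pos v := fun e => e ▸ hnv
            have k2 : β = α → β ∈ G.pos v → False := fun e hv => hav (e ▸ hv)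
            have k3 : β = -α → β ∈ G.pos w := fun e => e ▸ hnw
            simp only [Set.mem_diff, Set.mem_insert_iff, hmemb]
            tauto
          have hmA : α ∉ G.pos w \ G.pos v := fun hc => hαw hc.1
          have hmB : -α ∉ G.pos v \ G.pos w := fun hc => hc.2 hnw
          refine ⟨by rw [hA]; exact hAfin.insert _, by rw [hB]; exact hBfin.insert _, ?_⟩
          rw [hA, hB, Set.ncard_insert_of_notMem hmA hAfin,
            Set.ncard_insert_of_notMem hmB hBfin, hcard]
        · -- one set swaps an element, the other is unchanged
          have hA : G.pos b \ G.pos v = insert α ((G.pos w \ G.pos v) \ {-α}) := by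
            ext β
            have k2 : β = α → β ∈ G.pos v → False := fun e hv => hav (e ▸ hv)
            simp only [Set.mem_diff, Set.mem_insert_iff, Set.mem_singleton_iff, hmemb]
            tauto
          have hB : G.pos v \ G.pos b = G.pos v \ G.pos w := by
            ext β
            have k2 : β = α → β ∈ G.pos v → False := fun e hv => hav (e ▸ hv)
            have k3 : β = -α → β ∈ G.pos w := fun e => e ▸ hnw
            have k4 : β = -α → β ∈ G.pos v → False := fun e hv => hnv (e ▸ hv)
            simp only [Set.mem_diff, hmemb]
            tauto
          have hmA : -α ∈ G.pos w \ G.pos v := ⟨hnw, hnv⟩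
          have hmA' : α ∉ (G.pos w \ G.pos v) \ {-α} := fun hc => hαw hc.1.1
          have hpos : 0 < (G.pos w \ G.pos v).ncard :=
            (Set.ncard_pos hAfin).mpr ⟨-α, hmA⟩
          refine ⟨by rw [hA]; exact (hAfin.diff).insert _, by rw [hB]; exact hBfin, ?_⟩
          rw [hA, hB, Set.ncard_insert_of_notMem hmA' (hAfin.diff),
            Set.ncard_diff_singleton_of_mem hmA, ← hcard]
          omega
  obtain ⟨hAfin, -, hcard⟩ := key v' (hG.connected v v')
  have hB : G.pos v \ G.pos v' = ∅ := Set.diff_eq_empty.mpr h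
  have hA : G.pos v' \ G.pos v = ∅ := by
    rw [← Set.ncard_eq_zero hAfin, hcard, hB, Set.ncard_empty]
  exact hG.posdet v v' (le_antisymm h (Set.diff_eq_empty.mp hA))
end

section
/- In a Matsumoto graph, any path from v to v' has length congruent to d(v,v') modulo 2, where d(v,v') is the graph distance; moreover d(v,v') equals the cardinality of R⁺_{v'} \ R⁺_v. In particular every closed path has even length, so the graph is bipartite. -/
namespace MatsumotoGraph

section Aux
variable {d : ℕ} {M : Type*} [AddCommGroup M] [Module ℝ M] {G : MatsumotoGraph d M}

lemma inCone_zero (v : G.Vx) : G.inCone v 0 :=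
  ⟨0, fun _ => le_refl 0, by simp⟩

lemma inCone_add {v : G.Vx} {α β : M} (hα : G.inCone v α) (hβ : G.inCone v β) :
    G.inCone v (α + β) := by
  obtain ⟨c, hc, rfl⟩ := hα
  obtain ⟨c', hc', rfl⟩ := hβ
  refine ⟨c + c', fun i => add_nonneg (hc i) (hc' i), ?_⟩
  rw [← Finset.sum_add_distrib]
  exact Finset.sum_congr rfl fun i _ => by simp [add_smul]

lemma inCone_smul {v : G.Vx} {α : M} (hα : G.inCone v α) {t : ℝ} (ht : 0 ≤ t) :
    G.inCone v (t • α) := by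
  obtain ⟨c, hc, rfl⟩ := hα
  refine ⟨fun i => t * c i, fun i => mul_nonneg ht (hc i), ?_⟩
  rw [Finset.smul_sum]
  exact Finset.sum_congr rfl fun i _ => by rw [smul_smul]

lemma inCone_sum {v : G.Vx} {ι : Type*} (s : Finset ι) (g : ι → M)
    (h : ∀ i ∈ s, G.inCone v (g i)) : G.inCone v (∑ i ∈ s, g i) :=
  Finset.sum_induction g _ (fun _ _ ha hb => inCone_add ha hb) (inCone_zero v) h

lemma basisAt_mem_inCone (v : G.Vx) (i : Fin d) : G.inCone v (G.basisAt v i) := by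
  refine ⟨fun j => if j = i then 1 else 0, fun j => by positivity, ?_⟩
  simp [ite_smul]

lemma notBoth (hG : G.Axioms) {v : G.Vx} {α : M} (h0 : α ≠ 0)
    (h1 : G.inCone v α) (h2 : G.inCone v (-α)) : False := by
  obtain ⟨c, hc, hce⟩ := h1
  obtain ⟨c', hc', hce'⟩ := h2
  have hsum : ∑ i, (c i + c' i) • G.basisAt v i = 0 := by
    have : ∑ i, (c i + c' i) • G.basisAt v i = α + -α := by
      rw [hce', hce, ← Finset.sum_add_distrib]
      exact Finset.sum_congr rfl fun i _ => by simp [add_smul]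
    simpa using this
  have hzero := (Fintype.linearIndependent_iff.mp (hG.basis_indep v)) _ hsum
  apply h0
  rw [hce]
  have hczero : ∀ i, c i = 0 := fun i => by
    have h := hzero i; have := hc i; have := hc' i; linarith
  simp [hczero]

lemma adj_basis (hG : G.Axioms) {v w : G.Vx} {α : M} (h : G.adj v w α) :
    ∃ i, α = G.basisAt w i := (hG.ingoing w α).mp (Or.inl ⟨v, h⟩)

lemma adj_ne_zero (hG : G.Axioms) {v w : G.Vx} {α : M} (h : G.adj v w α) : α ≠ 0 := by
  obtain ⟨i, rfl⟩ := adj_basis hG h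
  exact (hG.basis_indep w).ne_zero i

lemma basisAt_mem_pos (hG : G.Axioms) (v : G.Vx) (i : Fin d) :
    G.basisAt v i ∈ G.pos v := by
  refine ⟨?_, basisAt_mem_inCone v i⟩
  rcases (hG.ingoing v (G.basisAt v i)).mpr ⟨i, rfl⟩ with ⟨v', h⟩ | h
  · exact Or.inl ⟨v', v, h⟩
  · exact Or.inr ⟨v, h⟩

lemma adj_mem_pos (hG : G.Axioms) {v w : G.Vx} {α : M} (h : G.adj v w α) :
    α ∈ G.pos w := by
  obtain ⟨i, rfl⟩ := adj_basis hG h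
  exact basisAt_mem_pos hG w i

lemma diff_source (hG : G.Axioms) {v w : G.Vx} {α : M} (h : G.adj v w α) :
    G.pos v \ G.pos w = {-α} := hG.step w v (-α) (hG.adj_symm h)

lemma oneOf (hG : G.Axioms) {a b : G.Vx} {α : M} (h : G.adj a b α) (u : G.Vx) :
    α ∈ G.pos u ∨ -α ∈ G.pos u := by
  have key : ∀ {x y : G.Vx}, Relation.ReflTransGen (fun p q => ∃ β, G.adj p q β) x y →
      (α ∈ G.pos x ∨ -α ∈ G.pos x) → (α ∈ G.pos y ∨ -α ∈ G.pos y) := by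
    intro x y hxy
    induction hxy with
    | refl => exact id
    | @tail m c h₁ h₂ ih =>
      intro hx
      obtain ⟨β, hβ⟩ := h₂
      rcases ih hx with hm | hm
      · by_cases hc : α ∈ G.pos c
        · exact Or.inl hc
        · have hd : α ∈ G.pos m \ G.pos c := ⟨hm, hc⟩
          rw [diff_source hG hβ] at hd
          right
          rw [show -α = β by rw [hd]; exact neg_neg β]
          exact adj_mem_pos hG hβ
      · by_cases hc : -α ∈ G.pos c
        · exact Or.inr hc
        · have hd : -α ∈ G.pos m \ G.pos c := ⟨hm, hc⟩
          rw [diff_source hG hβ] at hd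
          left
          rw [show α = β from by have := congrArg Neg.neg hd; simpa using this]
          exact adj_mem_pos hG hβ
  exact key (hG.connected b u) (Or.inl (adj_mem_pos hG h))

lemma inf_mem_pos (hG : G.Axioms) {u : G.Vx} {α : M} (hi : G.inf u α) (x : G.Vx) :
    α ∈ G.pos x := by
  have key : ∀ {y : G.Vx}, Relation.ReflTransGen (fun p q => ∃ β, G.adj p q β) u y →
      α ∈ G.pos y := by
    intro y huy
    induction huy with
    | refl =>
      obtain ⟨i, hαi⟩ := (hG.ingoing u α).mp (Or.inr hi)
      rw [hαi]; exact basisAt_mem_pos hG u i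
    | @tail m c h₁ h₂ ih =>
      obtain ⟨β, hβ⟩ := h₂
      by_cases hc : α ∈ G.pos c
      · exact hc
      · exfalso
        have hd : α ∈ G.pos m \ G.pos c := ⟨ih, hc⟩
        rw [diff_source hG hβ] at hd
        apply hG.inf_noninv u α hi
        rw [show -α = β from by rw [hd]; exact neg_neg β]
        exact (adj_mem_pos hG hβ).1
  exact key (hG.connected u x)

lemma compact_of_not_pos (hG : G.Axioms) {u u' : G.Vx} {α : M}
    (hα : α ∈ G.pos u) (h' : α ∉ G.pos u') : ∃ a b, G.adj a b α := by
  rcases hα.1 with h | ⟨x, hx⟩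
  · exact h
  · exact absurd (inf_mem_pos hG hx u') h'

lemma diff_empty (hG : G.Axioms) {v v' : G.Vx} (h : G.pos v' \ G.pos v = ∅) :
    v = v' := by
  apply hG.posdet
  apply Set.Subset.antisymm _ (Set.diff_eq_empty.mp h)
  intro x hx
  by_contra hx'
  obtain ⟨a, b, hab⟩ := compact_of_not_pos hG hx hx'
  have hneg : -x ∈ G.pos v' := (oneOf hG hab v').resolve_left hx'
  have hnegv : -x ∈ G.pos v := Set.diff_eq_empty.mp h hneg
  exact notBoth hG (adj_ne_zero hG hab) hx.2 hnegv.2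

lemma walk_card (hG : G.Axioms) : ∀ {v v' : G.Vx} (p : G.Walk v v'),
    (G.pos v' \ G.pos v).Finite ∧ (G.pos v' \ G.pos v).ncard ≤ p.length ∧
      p.length % 2 = (G.pos v' \ G.pos v).ncard % 2 := by
  intro v v' p
  induction p with
  | nil u => simp [Walk.length]
  | @cons v w u β hadj q ih =>
    obtain ⟨hf, hcard, hpar⟩ := ih
    have h1 : G.pos w \ G.pos v = {β} := hG.step _ _ _ hadj
    have h2 : G.pos v \ G.pos w = {-β} := diff_source hG hadj
    have hβw : β ∈ G.pos w := by
      have : β ∈ G.pos w \ G.pos v := h1 ▸ rfl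
      exact this.1
    have hβv : β ∉ G.pos v := by
      have : β ∈ G.pos w \ G.pos v := h1 ▸ rfl
      exact this.2
    have hnβv : -β ∈ G.pos v := by
      have : -β ∈ G.pos v \ G.pos w := h2 ▸ rfl
      exact this.1
    have hnβw : -β ∉ G.pos w := by
      have : -β ∈ G.pos v \ G.pos w := h2 ▸ rfl
      exact this.2
    have hβ0 : β ≠ 0 := adj_ne_zero hG hadj
    have hlen : (Walk.cons β hadj q).length = q.length + 1 := rfl
    rcases oneOf hG hadj u with hu | hu
    · -- β ∈ pos u : the difference grows by one
      have hD : G.pos u \ G.pos v = insert β (G.pos u \ G.pos w) := by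
        ext x
        simp only [Set.mem_insert_iff, Set.mem_diff]
        constructor
        · rintro ⟨hx1, hx2⟩
          by_cases hxw : x ∈ G.pos w
          · left
            have : x ∈ G.pos w \ G.pos v := ⟨hxw, hx2⟩
            rwa [h1] at this
          · exact Or.inr ⟨hx1, hxw⟩
        · rintro (rfl | ⟨hx1, hx2⟩)
          · exact ⟨hu, hβv⟩
          · refine ⟨hx1, fun hxv => ?_⟩
            have hx' : x ∈ G.pos v \ G.pos w := ⟨hxv, hx2⟩
            rw [h2] at hx'
            rw [hx'] at hx1
            exact notBoth hG hβ0 hu.2 hx1.2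
      have hβnot : β ∉ G.pos u \ G.pos w := fun h => h.2 hβw
      refine ⟨?_, ?_, ?_⟩
      · rw [hD]; exact hf.insert β
      · rw [hD, Set.ncard_insert_of_notMem hβnot hf, hlen]; omega
      · rw [hD, Set.ncard_insert_of_notMem hβnot hf, hlen]; omega
    · -- -β ∈ pos u : the difference shrinks by one
      have hβu : β ∉ G.pos u := fun h => notBoth hG hβ0 h.2 hu.2
      have hD' : G.pos u \ G.pos w = insert (-β) (G.pos u \ G.pos v) := by
        ext x
        simp only [Set.mem_insert_iff, Set.mem_diff]
        constructor
        · rintro ⟨hx1, hx2⟩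
          by_cases hxv : x ∈ G.pos v
          · left
            have : x ∈ G.pos v \ G.pos w := ⟨hxv, hx2⟩
            rwa [h2] at this
          · exact Or.inr ⟨hx1, hxv⟩
        · rintro (rfl | ⟨hx1, hx2⟩)
          · exact ⟨hu, hnβw⟩
          · refine ⟨hx1, fun hxw => ?_⟩
            have hx' : x ∈ G.pos w \ G.pos v := ⟨hxw, hx2⟩
            rw [h1] at hx'
            rw [hx'] at hx1
            exact hβu hx1
      have hDfin : (G.pos u \ G.pos v).Finite := by
        apply hf.subset
        rw [hD']
        exact Set.subset_insert _ _
      have hnot : -β ∉ G.pos u \ G.pos v := fun h => h.2 hnβv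
      have hcard' : (G.pos u \ G.pos w).ncard = (G.pos u \ G.pos v).ncard + 1 := by
        rw [hD', Set.ncard_insert_of_notMem hnot hDfin]
      refine ⟨hDfin, ?_, ?_⟩
      · rw [hlen]; omega
      · rw [hlen]; omega

lemma shorten (hG : G.Axioms) {v v' : G.Vx} (hne : v ≠ v') :
    ∃ (w : G.Vx) (β : M), G.adj v w β ∧ β ∈ G.pos v' \ G.pos v ∧
      G.pos v' \ G.pos w = (G.pos v' \ G.pos v) \ {β} := by
  have hnonempty : (G.pos v' \ G.pos v).Nonempty := by
    rcases Set.eq_empty_or_nonempty (G.pos v' \ G.pos v) with h | h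
    · exact absurd (diff_empty hG h) hne
    · exact h
  obtain ⟨α, hα1, hα2⟩ := hnonempty
  obtain ⟨a, b, hab⟩ := compact_of_not_pos hG hα1 hα2
  have hα0 : α ≠ 0 := adj_ne_zero hG hab
  have hnegα : -α ∈ G.pos v := (oneOf hG hab v).resolve_left hα2
  have hex : ∃ i, G.basisAt v i ∉ G.pos v' := by
    by_contra hall
    push_neg at hall
    have hsub : G.inCone v' (-α) := by
      obtain ⟨c, hcpos, hce⟩ := hnegα.2
      rw [hce]
      exact inCone_sum _ _ fun i _ => inCone_smul (hall i).2 (hcpos i)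
    exact notBoth hG hα0 hα1.2 hsub
  obtain ⟨i, hi⟩ := hex
  have hbase := basisAt_mem_pos hG v i
  have hedge : ∃ v'', G.adj v'' v (G.basisAt v i) := by
    rcases (hG.ingoing v (G.basisAt v i)).mpr ⟨i, rfl⟩ with h | h
    · exact h
    · exact absurd (inf_mem_pos hG h v') hi
  obtain ⟨w, hw⟩ := hedge
  have hadj : G.adj v w (-(G.basisAt v i)) := hG.adj_symm hw
  have hβpos' : -(G.basisAt v i) ∈ G.pos v' := (oneOf hG hw v').resolve_left hi
  have hβ0 : -(G.basisAt v i) ≠ 0 := adj_ne_zero hG hadj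
  have hβnotv : -(G.basisAt v i) ∉ G.pos v := fun h =>
    notBoth hG hβ0 h.2 (by rw [neg_neg]; exact hbase.2)
  have h1 : G.pos w \ G.pos v = {-(G.basisAt v i)} := hG.step _ _ _ hadj
  have h2 : G.pos v \ G.pos w = {-(-(G.basisAt v i))} := diff_source hG hadj
  refine ⟨w, -(G.basisAt v i), hadj, ⟨hβpos', hβnotv⟩, ?_⟩
  have hβw : -(G.basisAt v i) ∈ G.pos w := by
    have : -(G.basisAt v i) ∈ G.pos w \ G.pos v := h1 ▸ rfl
    exact this.1
  ext x
  simp only [Set.mem_diff, Set.mem_singleton_iff]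
  constructor
  · rintro ⟨hx1, hx2⟩
    refine ⟨⟨hx1, fun hxv => ?_⟩, fun hxβ => ?_⟩
    · have hx' : x ∈ G.pos v \ G.pos w := ⟨hxv, hx2⟩
      rw [h2] at hx'
      rw [hx', neg_neg] at hx1
      exact notBoth hG hβ0 hβpos'.2 (by rw [neg_neg]; exact hx1.2)
    · rw [hxβ] at hx2
      exact hx2 hβw
  · rintro ⟨⟨hx1, hx2⟩, hx3⟩
    refine ⟨hx1, fun hxw => ?_⟩
    have : x ∈ G.pos w \ G.pos v := ⟨hxw, hx2⟩
    rw [h1] at this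
    exact hx3 this

lemma geodesic (hG : G.Axioms) : ∀ (n : ℕ) (v v' : G.Vx),
    (G.pos v' \ G.pos v).Finite → (G.pos v' \ G.pos v).ncard = n →
    ∃ p : G.Walk v v', p.length = n := by
  intro n
  induction n with
  | zero =>
    intro v v' hf hc
    obtain rfl := diff_empty hG ((Set.ncard_eq_zero hf).mp hc)
    exact ⟨.nil v, rfl⟩
  | succ m ih =>
    intro v v' hf hc
    have hvv : v ≠ v' := by
      rintro rfl
      rw [Set.diff_self] at hc
      simp at hc
    obtain ⟨w, β, hadj, hβ, hset⟩ := shorten hG hvv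
    have hf' : (G.pos v' \ G.pos w).Finite := by rw [hset]; exact hf.diff
    have hc' : (G.pos v' \ G.pos w).ncard = m := by
      rw [hset, Set.ncard_diff_singleton_of_mem hβ, hc]
      omega
    obtain ⟨p, hp⟩ := ih w v' hf' hc'
    exact ⟨.cons β hadj p, by simp [Walk.length, hp]⟩

lemma exists_walk (hG : G.Axioms) (v v' : G.Vx) : Nonempty (G.Walk v v') := by
  have := hG.connected v v'
  induction this with
  | refl => exact ⟨.nil v⟩
  | @tail b c h₁ h₂ ih =>
    obtain ⟨β, hβ⟩ := h₂
    obtain ⟨p⟩ := ih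
    exact ⟨p.append (.cons β hβ (.nil c))⟩

lemma length_append : ∀ {v w u : G.Vx} (p : G.Walk v w) (q : G.Walk w u),
    (p.append q).length = p.length + q.length := by
  intro v w u p q
  induction p with
  | nil => simp [Walk.append, Walk.length]
  | cons α h p ih => simp [Walk.append, Walk.length, ih]; omega

lemma dist_eq (hG : G.Axioms) (v v' : G.Vx) :
    G.dist v v' = (G.pos v' \ G.pos v).ncard := by
  have hne : {n | ∃ p : G.Walk v v', p.length = n}.Nonempty := by
    obtain ⟨p⟩ := exists_walk hG v v'
    exact ⟨p.length, p, rfl⟩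
  obtain ⟨p, hp⟩ := Nat.sInf_mem hne
  obtain ⟨hf, hcard, _⟩ := walk_card hG p
  apply le_antisymm
  · obtain ⟨q, hq⟩ := geodesic hG _ v v' hf rfl
    exact Nat.sInf_le ⟨q, hq⟩
  · exact hcard.trans (le_of_eq hp)

end Aux

end MatsumotoGraph

/-- Any path from `v` to `v'` has length congruent to `d(v,v')` mod 2; the distance equals
the cardinality of `R⁺_{v'} \ R⁺_v`; closed paths have even length and the graph is bipartite. -/
theorem length_mod_two_and_dist_eq_card {d : ℕ} {M : Type*} [AddCommGroup M] [Module ℝ M]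
    (G : MatsumotoGraph d M) (hG : G.Axioms) :
    (∀ v v' : G.Vx, ∀ p : G.Walk v v', p.length ≡ G.dist v v' [MOD 2]) ∧
    (∀ v v' : G.Vx, G.dist v v' = (G.pos v' \ G.pos v).ncard) ∧
    (∀ v : G.Vx, ∀ p : G.Walk v v, Even p.length) ∧
    (∃ f : G.Vx → Bool, ∀ v v' α, G.adj v v' α → f v ≠ f v') := by
  have hpar : ∀ v v' : G.Vx, ∀ p : G.Walk v v', p.length ≡ G.dist v v' [MOD 2] := by
    intro v v' p
    have h := (MatsumotoGraph.walk_card hG p).2.2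
    show p.length % 2 = G.dist v v' % 2
    rw [MatsumotoGraph.dist_eq hG v v']
    exact h
  refine ⟨hpar, fun v v' => MatsumotoGraph.dist_eq hG v v', ?_, ?_⟩
  · intro v p
    have h := hpar v v p
    have hd : G.dist v v = 0 := by
      rw [MatsumotoGraph.dist_eq hG v v]; simp
    rw [hd] at h
    exact Nat.even_iff.mpr (by simpa [Nat.ModEq] using h)
  · by_cases hE : Nonempty G.Vx
    · obtain ⟨v₀⟩ := hE
      refine ⟨fun v => decide (G.dist v₀ v % 2 = 0), fun v v' α hadj hEq => ?_⟩
      have hne : {n | ∃ p : G.Walk v₀ v, p.length = n}.Nonempty := by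
        obtain ⟨p⟩ := MatsumotoGraph.exists_walk hG v₀ v
        exact ⟨p.length, p, rfl⟩
      obtain ⟨p, hp⟩ := Nat.sInf_mem hne
      have hp' : p.length = G.dist v₀ v := hp
      have hq : (p.append (.cons α hadj (.nil v'))).length % 2 = G.dist v₀ v' % 2 :=
        hpar v₀ v' (p.append (.cons α hadj (.nil v')))
      rw [MatsumotoGraph.length_append] at hq
      have hlen : (MatsumotoGraph.Walk.cons α hadj (MatsumotoGraph.Walk.nil v')).length = 1 := rfl
      rw [hlen, hp'] at hq
      have hiff := decide_eq_decide.mp hEq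
      omega
    · exact ⟨fun _ => true, fun v _ _ _ => (hE ⟨v⟩).elim⟩
end

section
/- Let (e,ε): v→v' be an oriented edge of a Matsumoto graph with root α = α_{e,ε}, and let α_1,…,α_d be the basis roots at v with α_1 = -α. Then there is a unique numbering α'_1,…,α'_d of the basis roots at v' such that α'_1 = α and for each i > 1 the ray α'_i lies in the convex cone spanned by α_i and α_1. -/
/-- Lemma (color): crossing an edge `v → v'` with root `α`, where the basis root of `v`
with index `i₀` equals `-α`, there is a unique renumbering `e` of the basis roots at `v'`
with `α'_{e i₀} = α` and each other `α'_{e i}` in the cone spanned by `α_i` and `α_{i₀}`. -/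
theorem unique_numbering_across_edge {d : ℕ} {M : Type*} [AddCommGroup M] [Module ℝ M]
    (G : MatsumotoGraph d M) (hG : G.Axioms) {v v' : G.Vx} {α : M}
    (h : G.adj v v' α) (i₀ : Fin d) (hi₀ : G.basisAt v i₀ = -α) :
    ∃! e : Fin d ≃ Fin d,
      G.basisAt v' (e i₀) = α ∧
      ∀ i : Fin d, i ≠ i₀ →
        G.basisAt v' (e i) ∈ MatsumotoGraph.cone2 (G.basisAt v i) (G.basisAt v i₀) := by
  classical
  have hliV := hG.basis_indep v
  have hliV' := hG.basis_indep v'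
  let bV : Module.Basis (Fin d) ℝ M := Module.Basis.mk hliV (by rw [hG.basis_span v])
  let bV' : Module.Basis (Fin d) ℝ M := Module.Basis.mk hliV' (by rw [hG.basis_span v'])
  have hbV : ∀ i, bV i = G.basisAt v i := fun i => Module.Basis.mk_apply _ _ i
  have hbV' : ∀ j, bV' j = G.basisAt v' j := fun j => Module.Basis.mk_apply _ _ j
  have hBinj : Function.Injective (G.basisAt v) := hliV.injective
  have hBinj' : Function.Injective (G.basisAt v') := hliV'.injective
  obtain ⟨j₀, hj₀⟩ : ∃ j, α = G.basisAt v' j := (hG.ingoing v' α).mp (Or.inl ⟨v, h⟩)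
  set C : Fin d → Fin d → ℝ := fun j i => bV.repr (G.basisAt v' j) i with hCdef
  set D : Fin d → Fin d → ℝ := fun i j => bV'.repr (G.basisAt v i) j with hDdef
  have hα : α = -G.basisAt v i₀ := by rw [hi₀, neg_neg]
  have hrepr : ∀ (b : Module.Basis (Fin d) ℝ M) (c : Fin d → ℝ) (x : M),
      x = ∑ i, c i • b i → ∀ i, b.repr x i = c i := by
    intro b c x hx i
    rw [hx]
    exact congrFun (b.repr_sum_self c) i
  -- values of the special rows
  have hCj₀ : ∀ i, C j₀ i = if i = i₀ then -1 else 0 := by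
    intro i
    refine hrepr bV (fun k => if k = i₀ then -1 else 0) (G.basisAt v' j₀) ?_ i
    rw [← hj₀, hα]
    simp [ite_smul, Finset.sum_ite_eq', hbV]
  have hDi₀ : ∀ j, D i₀ j = if j = j₀ then -1 else 0 := by
    intro j
    refine hrepr bV' (fun k => if k = j₀ then -1 else 0) (G.basisAt v i₀) ?_ j
    rw [hi₀, hj₀]
    simp [ite_smul, Finset.sum_ite_eq', hbV']
  -- each basis vector at a vertex is in the positive system there
  have hmemR' : ∀ j, G.basisAt v' j ∈ G.R := by
    intro j
    rcases (hG.ingoing v' (G.basisAt v' j)).mpr ⟨j, rfl⟩ with ⟨w, hw⟩ | hw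
    · exact Or.inl ⟨w, v', hw⟩
    · exact Or.inr ⟨v', hw⟩
  have hmemR : ∀ i, G.basisAt v i ∈ G.R := by
    intro i
    rcases (hG.ingoing v (G.basisAt v i)).mpr ⟨i, rfl⟩ with ⟨w, hw⟩ | hw
    · exact Or.inl ⟨w, v, hw⟩
    · exact Or.inr ⟨v, hw⟩
  have hconeself : ∀ (w : G.Vx) (j : Fin d), G.inCone w (G.basisAt w j) := by
    intro w j
    refine ⟨fun k => if k = j then 1 else 0, fun k => by by_cases hk : k = j <;> simp [hk], ?_⟩
    simp [ite_smul, Finset.sum_ite_eq']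
  -- nonnegativity of the coordinate matrices
  have hCnn : ∀ j, j ≠ j₀ → ∀ i, 0 ≤ C j i := by
    intro j hj i
    have hpos' : G.basisAt v' j ∈ G.pos v' := ⟨hmemR' j, hconeself v' j⟩
    have hne : G.basisAt v' j ≠ α := by
      rw [hj₀]; exact fun hc => hj (hBinj' hc)
    have hpos : G.basisAt v' j ∈ G.pos v := by
      by_contra hcon
      have : G.basisAt v' j ∈ G.pos v' \ G.pos v := ⟨hpos', hcon⟩
      rw [hG.step v v' α h] at this
      exact hne this
    obtain ⟨c, hc0, hceq⟩ := hpos.2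
    have hcj : C j i = c i := hrepr bV c _ (by simpa [hbV] using hceq) i
    rw [hcj]; exact hc0 i
  have hDnn : ∀ i, i ≠ i₀ → ∀ j, 0 ≤ D i j := by
    intro i hi j
    have hpos : G.basisAt v i ∈ G.pos v := ⟨hmemR i, hconeself v i⟩
    have hne : G.basisAt v i ≠ -α := by
      rw [← hi₀]; exact fun hc => hi (hBinj hc)
    have hpos' : G.basisAt v i ∈ G.pos v' := by
      by_contra hcon
      have : G.basisAt v i ∈ G.pos v \ G.pos v' := ⟨hpos, hcon⟩
      rw [hG.step v' v (-α) (hG.adj_symm h)] at this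
      exact hne this
    obtain ⟨c, hc0, hceq⟩ := hpos'.2
    have hcj : D i j = c j := hrepr bV' c _ (by simpa [hbV'] using hceq) j
    rw [hcj]; exact hc0 j
  -- the two composition identities
  have hDC : ∀ i k, (∑ j, D i j * C j k) = if i = k then 1 else 0 := by
    intro i k
    have h2 : bV.repr (bV i) k = if i = k then 1 else 0 := Module.Basis.repr_self_apply _ _ _
    calc (∑ j, D i j * C j k) = ∑ j, bV.repr (bV' j) k * bV'.repr (bV i) j := by
          refine Finset.sum_congr rfl fun j _ => ?_
          simp only [hCdef, hDdef, hbV, hbV']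
          ring
      _ = bV.repr (bV i) k := bV.sum_repr_mul_repr bV' (bV i) k
      _ = if i = k then 1 else 0 := h2
  have hCD : ∀ j l, (∑ i, C j i * D i l) = if j = l then 1 else 0 := by
    intro j l
    have h2 : bV'.repr (bV' j) l = if j = l then 1 else 0 := Module.Basis.repr_self_apply _ _ _
    calc (∑ i', C j i' * D i' l) = ∑ i', bV'.repr (bV i') l * bV.repr (bV' j) i' := by
          refine Finset.sum_congr rfl fun i' _ => ?_
          simp only [hCdef, hDdef, hbV, hbV']
          ring
      _ = bV'.repr (bV' j) l := bV'.sum_repr_mul_repr bV (bV' j) l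
      _ = if j = l then 1 else 0 := h2
  -- zero lemmas
  have Z1 : ∀ i, i ≠ i₀ → ∀ k, k ≠ i → k ≠ i₀ → ∀ j, D i j * C j k = 0 := by
    intro i hi k hki hki₀ j
    have hsum : (∑ j, D i j * C j k) = 0 := by
      rw [hDC, if_neg (fun hc => hki hc.symm)]
    have hnn : ∀ j' ∈ Finset.univ, 0 ≤ D i j' * C j' k := by
      intro j' _
      by_cases hj' : j' = j₀
      · subst hj'
        rw [hCj₀ k, if_neg hki₀, mul_zero]
      · exact mul_nonneg (hDnn i hi j') (hCnn j' hj' k)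
    exact (Finset.sum_eq_zero_iff_of_nonneg hnn).mp hsum j (Finset.mem_univ j)
  have Z2 : ∀ j, j ≠ j₀ → ∀ j', j' ≠ j₀ → j ≠ j' → ∀ i, C j i * D i j' = 0 := by
    intro j hj j' hj' hjj' i
    have hsum : (∑ i, C j i * D i j') = 0 := by rw [hCD]; simp [hjj']
    have hnn : ∀ i' ∈ Finset.univ, 0 ≤ C j i' * D i' j' := by
      intro i' _
      by_cases hi' : i' = i₀
      · subst hi'
        rw [hDi₀ j', if_neg hj', mul_zero]
      · exact mul_nonneg (hCnn j hj i') (hDnn i' hi' j')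
    exact (Finset.sum_eq_zero_iff_of_nonneg hnn).mp hsum i (Finset.mem_univ i)
  -- C j₀ vanishes off i₀, D i₀ vanishes off j₀
  have hCj₀z : ∀ i, i ≠ i₀ → C j₀ i = 0 := by
    intro i hi; rw [hCj₀ i, if_neg hi]
  -- for each i ≠ i₀ there is a unique j with D i j * C j i > 0
  have key : ∀ i, i ≠ i₀ → ∃! j, 0 < D i j * C j i := by
    intro i hi
    have hsum : (∑ j, D i j * C j i) = 1 := by rw [hDC]; simp
    have hex : ∃ j, 0 < D i j * C j i := by
      by_contra hcon
      push_neg at hcon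
      have : (∑ j, D i j * C j i) = 0 := by
        refine Finset.sum_eq_zero fun j _ => ?_
        by_cases hj : j = j₀
        · subst hj; rw [hCj₀z i hi, mul_zero]
        · exact le_antisymm (hcon j) (mul_nonneg (hDnn i hi j) (hCnn j hj i))
      rw [this] at hsum; norm_num at hsum
    obtain ⟨j, hjpos⟩ := hex
    have hjprop : ∀ j', 0 < D i j' * C j' i → j' = j := by
      intro j' hj'pos
      by_contra hne
      have hjj₀ : j ≠ j₀ := fun hc => by
        rw [hc, hCj₀z i hi, mul_zero] at hjpos; exact lt_irrefl 0 hjpos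
      have hj'j₀ : j' ≠ j₀ := fun hc => by
        rw [hc, hCj₀z i hi, mul_zero] at hj'pos; exact lt_irrefl 0 hj'pos
      have hCji : 0 < C j i := by
        rcases lt_or_eq_of_le (hCnn j hjj₀ i) with h' | h'
        · exact h'
        · rw [← h', mul_zero] at hjpos; exact absurd hjpos (lt_irrefl 0)
      have hDij' : 0 < D i j' := by
        rcases lt_or_eq_of_le (hDnn i hi j') with h' | h'
        · exact h'
        · rw [← h', zero_mul] at hj'pos; exact absurd hj'pos (lt_irrefl 0)
      have hz := Z2 j hjj₀ j' hj'j₀ (fun hc => hne hc.symm) i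
      exact absurd hz (ne_of_gt (mul_pos hCji hDij'))
    exact ⟨j, hjpos, hjprop⟩
  -- the map
  let f : Fin d → Fin d := fun i => if hi : i = i₀ then j₀ else (key i hi).choose
  have hf₀ : f i₀ = j₀ := dif_pos rfl
  have hfspec : ∀ i (hi : i ≠ i₀), 0 < D i (f i) * C (f i) i := by
    intro i hi
    simp only [f, dif_neg hi]
    exact (key i hi).choose_spec.1
  have hfuniq : ∀ i (hi : i ≠ i₀) j, 0 < D i j * C j i → j = f i := by
    intro i hi j hj
    simp only [f, dif_neg hi]
    exact (key i hi).choose_spec.2 j hj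
  have hfne : ∀ i, i ≠ i₀ → f i ≠ j₀ := by
    intro i hi hc
    have := hfspec i hi
    rw [hc, hCj₀z i hi, mul_zero] at this
    exact lt_irrefl 0 this
  have hCfpos : ∀ i (hi : i ≠ i₀), 0 < C (f i) i := by
    intro i hi
    rcases lt_or_eq_of_le (hCnn (f i) (hfne i hi) i) with h' | h'
    · exact h'
    · have := hfspec i hi; rw [← h', mul_zero] at this; exact absurd this (lt_irrefl 0)
  have hDfpos : ∀ i (hi : i ≠ i₀), 0 < D i (f i) := by
    intro i hi
    rcases lt_or_eq_of_le (hDnn i hi (f i)) with h' | h'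
    · exact h'
    · have := hfspec i hi; rw [← h', zero_mul] at this; exact absurd this (lt_irrefl 0)
  have hCfz : ∀ i (hi : i ≠ i₀) k, k ≠ i → k ≠ i₀ → C (f i) k = 0 := by
    intro i hi k hki hki₀
    have := Z1 i hi k hki hki₀ (f i)
    rcases mul_eq_zero.mp this with h' | h'
    · exact absurd h' (ne_of_gt (hDfpos i hi))
    · exact h'
  have hfinj : Function.Injective f := by
    intro a b hab
    by_cases ha : a = i₀ <;> by_cases hb : b = i₀
    · rw [ha, hb]
    · exfalso; rw [ha, hf₀] at hab; exact hfne b hb hab.symm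
    · exfalso; rw [hb, hf₀] at hab; exact hfne a ha hab
    · by_contra hne
      have h1 := hCfpos a ha
      have h2 := hCfpos b hb
      rw [hab] at h1
      have := hCfz b hb a (fun hc => hne hc) ha
      rw [this] at h1; exact lt_irrefl 0 h1
  let e : Fin d ≃ Fin d := Equiv.ofBijective f (Finite.injective_iff_bijective.mp hfinj)
  have heapp : ∀ i, e i = f i := fun i => rfl
  -- expansion of basis vectors at v' in terms of the basis at v
  have hexp : ∀ j, G.basisAt v' j = ∑ k, C j k • G.basisAt v k := by
    intro j
    conv_lhs => rw [← bV.sum_repr (G.basisAt v' j)]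
    exact Finset.sum_congr rfl fun k _ => by rw [hbV]
  refine ⟨e, ⟨?_, ?_⟩, ?_⟩
  · rw [heapp, hf₀, ← hj₀]
  · intro i hi
    refine ⟨C (f i) i, C (f i) i₀, le_of_lt (hCfpos i hi), hCnn (f i) (hfne i hi) i₀, ?_⟩
    rw [heapp, hexp (f i)]
    rw [show (∑ k, C (f i) k • G.basisAt v k) = ∑ k ∈ ({i, i₀} : Finset (Fin d)), C (f i) k • G.basisAt v k from (Finset.sum_subset (Finset.subset_univ _) (fun x _ hx => by
      simp only [Finset.mem_insert, Finset.mem_singleton, not_or] at hx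
      rw [hCfz i hi x hx.1 hx.2, zero_smul])).symm]
    rw [Finset.sum_pair hi]
  · -- uniqueness
    rintro e' ⟨he'₀, he'⟩
    refine Equiv.ext fun i => ?_
    rw [heapp]
    by_cases hi : i = i₀
    · subst hi
      rw [hf₀]
      exact hBinj' (by rw [he'₀, hj₀])
    · obtain ⟨a, b, ha, hb, hab⟩ := he' i hi
      set j' := e' i with hj'def
      have hj'j₀ : j' ≠ j₀ := by
        intro hc
        have he'i₀ : e' i₀ = j₀ := hBinj' (by rw [he'₀, hj₀])
        rw [← he'i₀] at hc
        exact hi (e'.injective hc)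
      have hCj' : ∀ k, C j' k = (if k = i then a else 0) + (if k = i₀ then b else 0) := by
        intro k
        refine hrepr bV (fun k => (if k = i then a else 0) + (if k = i₀ then b else 0))
          (G.basisAt v' j') ?_ k
        rw [hab]
        simp [add_smul, ite_smul, Finset.sum_add_distrib, Finset.sum_ite_eq', hbV]
      have hsum : (∑ i', C j' i' * D i' j') = C j' i * D i j' := by
        refine Finset.sum_eq_single i (fun b' _ hb' => ?_) (fun hc => absurd (Finset.mem_univ i) hc)
        by_cases hbi₀ : b' = i₀
        · subst hbi₀
          rw [hDi₀ j', if_neg hj'j₀, mul_zero]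
        · rw [hCj' b', if_neg hb', if_neg hbi₀, add_zero, zero_mul]
      have h1 : C j' i * D i j' = 1 := by
        rw [← hsum, hCD]; simp
      have hpos : 0 < D i j' * C j' i := by
        rw [mul_comm, h1]; norm_num
      exact hfuniq i hi j' hpos
end

section
/- A polygon (cycle graph) admitting a geometric realization as a Matsumoto graph of degree 2 must have an even number of edges. -/
/-!
Fix a set `S` containing exactly one of `β`, `-β` for each `β ≠ -β`. Crossing an edge
`v → v'` with root `α` trades `-α` for `α` in the positive system, so the parity of
`#(R⁺_v ∩ S)` changes along every edge and properly 2-colours the graph. Sending the end of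
an ingoing edge at `v` to the end of the same edge at its source is an involution on
`V × Fin d` which swaps the two colours, so both colour classes have the same size.
-/

theorem even_card_of_involutive_of_fst_mem_iff {V ι : Type*} [Finite V] [Finite ι] [Nonempty ι]
    (s : Set V) (f : V × ι → V × ι) (hf : Function.Involutive f)
    (hs : ∀ x, (f x).1 ∈ s ↔ x.1 ∉ s) : Even (Nat.card V) := by
  have hswap : {x : V × ι // x.1 ∈ s} ≃ {x : V × ι // x.1 ∈ sᶜ} :=
    (hf.toPerm f).subtypeEquiv fun x => iff_not_comm.mp (hs x)
  have hcard (t : Set V) : Nat.card {x : V × ι // x.1 ∈ t} = t.ncard * Nat.card ι := by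
    rw [Nat.card_congr Equiv.prodSubtypeFstEquivSubtypeProd, Nat.card_prod,
      Nat.card_coe_set_eq]
  have hhalf : s.ncard = sᶜ.ncard :=
    Nat.eq_of_mul_eq_mul_right Nat.card_pos (by rw [← hcard, ← hcard, Nat.card_congr hswap])
  rw [← Set.ncard_add_ncard_compl s, ← hhalf]
  exact ⟨_, rfl⟩

theorem exists_set_mem_iff_neg_notMem (α : Type*) [InvolutiveNeg α] :
    ∃ S : Set α, ∀ a, a ≠ -a → (a ∈ S ↔ -a ∉ S) := by
  refine ⟨{a | WellOrderingRel a (-a)}, fun a ha => ?_⟩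
  simp only [Set.mem_ofPred_eq, neg_neg]
  rcases trichotomous_of WellOrderingRel a (-a) with h | h | h
  · exact iff_of_true h (asymm h)
  · exact absurd h ha
  · exact iff_of_false (asymm h) (not_not.mpr h)

namespace MatsumotoGraph.Axioms

variable {d : ℕ} {M : Type*} [AddCommGroup M] [Module ℝ M] {G : MatsumotoGraph d M}
  {v v' w w' : G.Vx} {α : M}

theorem mem_pos_of_adj (hG : G.Axioms) (h : G.adj v v' α) : α ∈ G.pos v' :=
  (hG.step v v' α h ▸ Set.mem_singleton α : α ∈ G.pos v' \ G.pos v).1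

theorem notMem_pos_of_adj (hG : G.Axioms) (h : G.adj v v' α) : α ∉ G.pos v :=
  (hG.step v v' α h ▸ Set.mem_singleton α : α ∈ G.pos v' \ G.pos v).2

theorem pos_eq_of_adj (hG : G.Axioms) (h : G.adj v v' α) :
    G.pos v' = insert α (G.pos v \ {-α}) := by
  ext x
  have hin := Set.ext_iff.mp (hG.step v v' α h) x
  have hout := Set.ext_iff.mp (hG.step v' v (-α) (hG.adj_symm h)) x
  simp only [Set.mem_sdiff, Set.mem_singleton_iff, Set.mem_insert_iff] at hin hout ⊢
  tauto

theorem ne_neg_of_adj (hG : G.Axioms) (h : G.adj v v' α) : α ≠ -α := fun hα =>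
  hG.notMem_pos_of_adj h (hα ▸ hG.mem_pos_of_adj (hG.adj_symm h))

theorem eq_of_adj_of_adj (hG : G.Axioms) (h : G.adj w v α) (h' : G.adj w' v α) : w = w' :=
  hG.posdet w w' <| by
    rw [hG.pos_eq_of_adj (hG.adj_symm h), hG.pos_eq_of_adj (hG.adj_symm h')]

theorem finite_R (hG : G.Axioms) [Finite G.Vx] : G.R.Finite := by
  refine (Set.finite_range fun x : G.Vx × Fin d => G.basisAt x.1 x.2).subset ?_
  rintro α (⟨v, v', h⟩ | ⟨v, h⟩)
  · obtain ⟨i, rfl⟩ := (hG.ingoing v' α).mp (Or.inl ⟨v, h⟩)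
    exact ⟨(v', i), rfl⟩
  · obtain ⟨i, rfl⟩ := (hG.ingoing v α).mp (Or.inr h)
    exact ⟨(v, i), rfl⟩

theorem ncard_pos_inter_of_adj (hG : G.Axioms) [Finite G.Vx] {S : Set M} (hαS : α ∈ S)
    (hnegαS : -α ∉ S) (h : G.adj v v' α) :
    (G.pos v' ∩ S).ncard = (G.pos v ∩ S).ncard + 1 := by
  have hpos : G.pos v' ∩ S = insert α (G.pos v ∩ S) := by
    rw [hG.pos_eq_of_adj h, Set.insert_inter_of_mem hαS]
    congr 1
    ext x
    refine ⟨fun ⟨⟨hx, _⟩, hxS⟩ => ⟨hx, hxS⟩, fun ⟨hx, hxS⟩ => ⟨⟨hx, ?_⟩, hxS⟩⟩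
    rintro rfl
    exact hnegαS hxS
  rw [hpos, Set.ncard_insert_of_notMem (fun hmem => hG.notMem_pos_of_adj h hmem.1)
    ((hG.finite_R.subset fun _ hx => hx.1).inter_of_left S)]

theorem even_ncard_pos_inter_iff_of_adj (hG : G.Axioms) [Finite G.Vx] {S : Set M}
    (hS : ∀ a, a ≠ -a → (a ∈ S ↔ -a ∉ S)) (h : G.adj v v' α) :
    Even (G.pos v' ∩ S).ncard ↔ ¬Even (G.pos v ∩ S).ncard := by
  by_cases hαS : α ∈ S
  · rw [hG.ncard_pos_inter_of_adj hαS ((hS α (hG.ne_neg_of_adj h)).mp hαS) h, Nat.even_add_one]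
  · have hnegαS : -α ∈ S := not_not.mp (mt (hS α (hG.ne_neg_of_adj h)).mpr hαS)
    rw [hG.ncard_pos_inter_of_adj hnegαS (by rwa [neg_neg]) (hG.adj_symm h), Nat.even_add_one,
      not_not]

theorem exists_reverse_end (hG : G.Axioms) (hnoinf : ∀ v α, ¬ G.inf v α) (x : G.Vx × Fin d) :
    ∃ y : G.Vx × Fin d,
      G.adj y.1 x.1 (G.basisAt x.1 x.2) ∧ G.basisAt y.1 y.2 = -G.basisAt x.1 x.2 := by
  obtain ⟨w, hw⟩ := ((hG.ingoing x.1 _).mpr ⟨x.2, rfl⟩).resolve_right (hnoinf _ _)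
  obtain ⟨j, hj⟩ := (hG.ingoing w _).mp (Or.inl ⟨x.1, hG.adj_symm hw⟩)
  exact ⟨(w, j), hw, hj.symm⟩

theorem involutive_of_reverse_end (hG : G.Axioms) {f : G.Vx × Fin d → G.Vx × Fin d}
    (hf : ∀ x, G.adj (f x).1 x.1 (G.basisAt x.1 x.2) ∧
      G.basisAt (f x).1 (f x).2 = -G.basisAt x.1 x.2) :
    Function.Involutive f := by
  intro x
  obtain ⟨hadj, hroot⟩ := hf x
  obtain ⟨hadj', hroot'⟩ := hf (f x)
  have hback : G.adj x.1 (f x).1 (G.basisAt (f x).1 (f x).2) := hroot ▸ hG.adj_symm hadj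
  have hfst : (f (f x)).1 = x.1 := hG.eq_of_adj_of_adj hadj' hback
  have hsnd : (f (f x)).2 = x.2 := by
    rw [hroot, neg_neg, hfst] at hroot'
    exact (hG.basis_indep x.1).injective hroot'
  exact Prod.ext hfst hsnd

theorem even_natCard (hG : G.Axioms) [Finite G.Vx] [NeZero d] (hnoinf : ∀ v α, ¬ G.inf v α) :
    Even (Nat.card G.Vx) := by
  obtain ⟨S, hS⟩ := exists_set_mem_iff_neg_notMem M
  choose f hf using hG.exists_reverse_end hnoinf
  exact even_card_of_involutive_of_fst_mem_iff {v | Even (G.pos v ∩ S).ncard} f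
    (hG.involutive_of_reverse_end hf)
    fun x => hG.even_ncard_pos_inter_iff_of_adj hS (hG.adj_symm (hf x).1)

end MatsumotoGraph.Axioms

/-- A polygon (finite connected degree-2 graph with only compact edges) admitting a
geometric realization as a Matsumoto graph has an even number of edges (equivalently,
of vertices). -/
theorem polygon_even {M : Type*} [AddCommGroup M] [Module ℝ M]
    (G : MatsumotoGraph 2 M) (hG : G.Axioms)
    (hfin : Finite G.Vx) (hnoinf : ∀ v α, ¬ G.inf v α) :
    Even (Nat.card G.Vx) :=
  hG.even_natCard hnoinf
end

section
/- (Generalized Matsumoto theorem) In a Matsumoto graph, any two shortest paths from a vertex v to a vertex v' are braid equivalent. -/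
namespace MatsumotoGraph

variable {d : ℕ} {M : Type*} [AddCommGroup M] [Module ℝ M] (G : MatsumotoGraph d M)

/-- Elementary braid move: `p` and `q` are the two length-`m` halves, between a pair of
opposite vertices, of a rank-2 subgraph which is a `2m`-gon: all their roots lie in a
2-dimensional subspace `W`, the set of roots in `W` is finite of cardinality `2m`, and
both paths are shortest paths of length `m`. -/
def ElemBraid {v v' : G.Vx} (p q : G.Walk v v') : Prop :=
  ∃ W : Submodule ℝ M, Module.finrank ℝ ↥W = 2 ∧
    (∀ α ∈ p.roots, α ∈ W) ∧ (∀ α ∈ q.roots, α ∈ W) ∧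
    (G.R ∩ ↑W).Finite ∧ (G.R ∩ ↑W).ncard = 2 * p.length ∧
    q.length = p.length ∧ p.length = G.dist v v'

/-- Braid equivalence: the smallest equivalence relation on paths closed under
concatenation and containing the elementary braid moves. -/
inductive BraidEquiv : ∀ {v v' : G.Vx}, G.Walk v v' → G.Walk v v' → Prop
  | elem {v v'} {p q : G.Walk v v'} : G.ElemBraid p q → BraidEquiv p q
  | refl {v v'} (p : G.Walk v v') : BraidEquiv p p
  | symm {v v'} {p q : G.Walk v v'} : BraidEquiv p q → BraidEquiv q p
  | trans {v v'} {p q r : G.Walk v v'} : BraidEquiv p q → BraidEquiv q r → BraidEquiv p r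
  | append {v w u} {p p' : G.Walk v w} {q q' : G.Walk w u} :
      BraidEquiv p p' → BraidEquiv q q' → BraidEquiv (p.append q) (p'.append q')

end MatsumotoGraph

/-! Crossing an edge changes the positive system by one root, so a walk from `v` to `x` has length
at least `#(R⁺_v \ R⁺_x)`. Conversely, let `C` be a salient cone such that the negative of every
root of `R⁺_y` outside `C` is a root in `C`. If `R⁺_y ⊄ C`, some simple root at `y` lies outside `C`
(otherwise the whole cone of `y` would), and crossing its wall brings `R⁺_y` one root closer to
`C`; iterating reaches the vertex with positive system `R ∩ C`. With `C` the cone at `x` this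
gives `dist v x = #(R⁺_v \ R⁺_x)`.

If two geodesics from `v` to `x` start with different roots `α, β`, both are positive at `x`. Let
`W` be the plane of the two simple roots `-α, -β` at `v`, and `C` the cone of `v` with its face in
`W` reflected. Descending towards `C` from the two neighbours gives two walks of length
`#(R⁺_v ∩ W)` starting with `α` and `β` and ending at the same vertex `u`, which lies between `v`
and `x`: the two halves of the rank-2 polygon. Induction on the distance concludes. -/

namespace Module.Basis

variable {ι 𝕜 M : Type*}

theorem mem_span_image_iff_repr_eq_zero [Semiring 𝕜] [AddCommMonoid M] [Module 𝕜 M]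
    (b : Basis ι 𝕜 M) {s : Set ι} {z : M} :
    z ∈ Submodule.span 𝕜 (b '' s) ↔ ∀ k ∉ s, b.repr z k = 0 := by
  rw [b.mem_span_image]
  exact ⟨fun h k hk => Finsupp.notMem_support_iff.mp (mt (@h k) hk),
    fun h k hk => by_contra fun hks => Finsupp.mem_support_iff.mp hk (h k hks)⟩

theorem finrank_span_image_pair [Ring 𝕜] [Nontrivial 𝕜] [StrongRankCondition 𝕜]
    [AddCommGroup M] [Module 𝕜 M] (b : Basis ι 𝕜 M) {i j : ι} (hij : i ≠ j) :
    Module.finrank 𝕜 (Submodule.span 𝕜 (b '' {i, j})) = 2 := by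
  have hinj : Function.Injective ![i, j] := by
    intro x y
    fin_cases x <;> fin_cases y <;> simp [hij, hij.symm]
  have hli : LinearIndependent 𝕜 ![b i, b j] := by
    convert b.linearIndependent.comp _ hinj using 1
    ext x
    fin_cases x <;> rfl
  rw [Set.image_pair, ← Matrix.range_cons_cons_empty (b i) (b j) ![], finrank_span_eq_card hli]
  simp

variable [Field 𝕜] [LinearOrder 𝕜] [IsStrictOrderedRing 𝕜] [AddCommGroup M] [Module 𝕜 M]
  (b : Basis ι 𝕜 M)

/-- For `s = ∅` this is the cone spanned by `b`; in general the face spanned by `b '' s` is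
replaced by its negative. For a rank-2 face at a vertex of a Matsumoto graph, its roots form the
positive system of the opposite vertex of the polygon. -/
def lexCone (s : Set ι) : PointedCone 𝕜 M where
  carrier := {z | (∀ k ∉ s, 0 ≤ b.repr z k) ∧
    ((∀ k ∉ s, b.repr z k = 0) → ∀ k ∈ s, b.repr z k ≤ 0)}
  zero_mem' := by simp
  add_mem' := by
    rintro z z' ⟨hz, hzs⟩ ⟨hz', hz's⟩
    refine ⟨fun k hk => by simpa using add_nonneg (hz k hk) (hz' k hk), fun h0 k hk => ?_⟩
    have h0' : ∀ k ∉ s, b.repr z k = 0 ∧ b.repr z' k = 0 := fun k hk => by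
      have := h0 k hk
      simp only [map_add, Finsupp.coe_add, Pi.add_apply] at this
      constructor <;> linarith [hz k hk, hz' k hk]
    simpa using add_nonpos (hzs (fun k hk => (h0' k hk).1) k hk)
      (hz's (fun k hk => (h0' k hk).2) k hk)
  smul_mem' := by
    rintro c z ⟨hz, hzs⟩
    simp only [Set.mem_ofPred_eq, ← Nonneg.coe_smul, map_smul, Finsupp.coe_smul, Pi.smul_apply,
      smul_eq_mul]
    refine ⟨fun k hk => mul_nonneg c.2 (hz k hk), fun h0 k hk => ?_⟩
    rcases c.2.eq_or_lt with hc | hc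
    · simp [← hc]
    · exact mul_nonpos_of_nonneg_of_nonpos hc.le
        (hzs (fun k hk => (mul_eq_zero.mp (h0 k hk)).resolve_left hc.ne') k hk)

theorem mem_lexCone {s : Set ι} {z : M} : z ∈ b.lexCone s ↔ (∀ k ∉ s, 0 ≤ b.repr z k) ∧
    ((∀ k ∉ s, b.repr z k = 0) → ∀ k ∈ s, b.repr z k ≤ 0) := Iff.rfl

theorem mem_lexCone_empty {z : M} : z ∈ b.lexCone ∅ ↔ ∀ k, 0 ≤ b.repr z k := by
  simp [mem_lexCone]

theorem salient_lexCone (s : Set ι) : (b.lexCone s : ConvexCone 𝕜 M).Salient := by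
  intro z hz hz0 hnz
  obtain ⟨hz, hzs⟩ := hz
  obtain ⟨hnz, hnzs⟩ := hnz
  simp only [map_neg, Finsupp.coe_neg, Pi.neg_apply, neg_nonneg, neg_eq_zero] at hnz hnzs
  have hoff : ∀ k ∉ s, b.repr z k = 0 := fun k hk => le_antisymm (hnz k hk) (hz k hk)
  refine hz0 (b.repr.map_eq_zero_iff.mp (Finsupp.ext fun k => ?_))
  by_cases hk : k ∈ s
  · exact le_antisymm (hzs hoff k hk) (by simpa using hnzs hoff k hk)
  · exact hoff k hk

theorem mem_of_repr_nonneg {K : PointedCone 𝕜 M} {z : M} (hz : ∀ k, 0 ≤ b.repr z k)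
    (hK : ∀ k ∈ (b.repr z).support, b k ∈ K) : z ∈ K := by
  rw [← b.linearCombination_repr z, Finsupp.linearCombination_apply, Finsupp.sum]
  exact Submodule.sum_mem _ fun k hk => K.smul_mem (hz k) (hK k hk)

theorem notMem_lexCone_iff {s : Set ι} {z : M} (hz : ∀ k, 0 ≤ b.repr z k) :
    z ∉ b.lexCone s ↔ z ∈ Submodule.span 𝕜 (b '' s) ∧ z ≠ 0 := by
  rw [mem_span_image_iff_repr_eq_zero, mem_lexCone, Ne, ← b.repr.map_eq_zero_iff]
  constructor
  · intro h
    push Not at h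
    obtain ⟨hoff, k, hks, hk⟩ := h fun k _ => hz k
    exact ⟨hoff, fun h0 => by simp [h0] at hk⟩
  · rintro ⟨hoff, hne⟩ ⟨-, hs⟩
    refine hne (Finsupp.ext fun k => ?_)
    by_cases hk : k ∈ s
    · exact le_antisymm (hs hoff k hk) (hz k)
    · exact hoff k hk

theorem neg_mem_lexCone {s : Set ι} {z : M} (hz : ∀ k, 0 ≤ b.repr z k)
    (hzs : z ∈ Submodule.span 𝕜 (b '' s)) : -z ∈ b.lexCone s := by
  rw [mem_span_image_iff_repr_eq_zero] at hzs
  simp only [mem_lexCone, map_neg, Finsupp.coe_neg, Pi.neg_apply, neg_nonneg, neg_eq_zero,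
    neg_nonpos]
  exact ⟨fun k hk => (hzs k hk).le, fun _ k _ => hz k⟩

end Module.Basis

namespace MatsumotoGraph

open Module Pointwise

variable {d : ℕ} {M : Type*} [AddCommGroup M] [Module ℝ M] {G : MatsumotoGraph d M}

namespace Walk

@[simp] theorem length_cons {v w u : G.Vx} (α : M) (hα : G.adj v w α) (p : G.Walk w u) :
    (Walk.cons α hα p).length = p.length + 1 := rfl

@[simp] theorem roots_cons {v w u : G.Vx} (α : M) (hα : G.adj v w α) (p : G.Walk w u) :
    (Walk.cons α hα p).roots = α :: p.roots := rfl

theorem length_append {v w u : G.Vx} (p : G.Walk v w) (q : G.Walk w u) :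
    (p.append q).length = p.length + q.length := by
  induction p with
  | nil => simp [append, length]
  | cons α hα p ih => simp only [append, length_cons, ih, Nat.add_right_comm]

end Walk

theorem BraidEquiv.cons {v w u : G.Vx} {α : M} (hα : G.adj v w α) {p q : G.Walk w u}
    (hpq : G.BraidEquiv p q) : G.BraidEquiv (.cons α hα p) (.cons α hα q) :=
  .append (.refl (.cons α hα (.nil w))) hpq

theorem pos_subset_R (v : G.Vx) : G.pos v ⊆ G.R := fun _ hγ => hγ.1

theorem dist_le_length {v x : G.Vx} (p : G.Walk v x) : G.dist v x ≤ p.length :=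
  Nat.sInf_le ⟨p, rfl⟩

namespace Axioms

variable (h : G.Axioms)
include h

noncomputable def basis (v : G.Vx) : Basis (Fin d) ℝ M :=
  Basis.mk (h.basis_indep v) (h.basis_span v).ge

theorem basis_apply (v : G.Vx) (i : Fin d) : h.basis v i = G.basisAt v i := by
  simp [basis]

theorem inCone_iff {v : G.Vx} {z : M} : G.inCone v z ↔ z ∈ (h.basis v).lexCone ∅ := by
  rw [Basis.mem_lexCone_empty]
  constructor
  · rintro ⟨c, hc, rfl⟩
    simp_rw [← h.basis_apply]
    rwa [Basis.repr_sum_self]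
  · exact fun hz => ⟨_, hz, by simpa [h.basis_apply] using ((h.basis v).sum_repr z).symm⟩

theorem pos_eq (v : G.Vx) : G.pos v = G.R ∩ (h.basis v).lexCone ∅ :=
  Set.ext fun _ => and_congr_right' h.inCone_iff

theorem basisAt_mem_pos (v : G.Vx) (i : Fin d) : G.basisAt v i ∈ G.pos v := by
  refine ⟨?_, h.inCone_iff.mpr ?_⟩
  · rcases (h.ingoing v _).mpr ⟨i, rfl⟩ with ⟨v', hv'⟩ | hinf
    · exact Or.inl ⟨v', v, hv'⟩
    · exact Or.inr ⟨v, hinf⟩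
  · rw [Basis.mem_lexCone_empty, ← h.basis_apply, Basis.repr_self]
    exact fun k => Finsupp.single_nonneg.mpr zero_le_one k

theorem mem_pos_of_adj_s8 {v w : G.Vx} {α : M} (hα : G.adj v w α) : α ∈ G.pos w :=
  ((h.step v w α hα).symm ▸ rfl : α ∈ G.pos w \ G.pos v).1

theorem zero_notMem_R : (0 : M) ∉ G.R := by
  rintro (⟨v, w, hα⟩ | ⟨v, hinf⟩)
  · have h0 : (0 : M) ∈ G.pos w \ G.pos v := (h.step v w 0 hα).symm ▸ rfl
    exact h0.2 ⟨Or.inl ⟨v, w, hα⟩, ⟨0, fun _ => le_rfl, by simp⟩⟩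
  · exact h.inf_noninv v 0 hinf (by rw [neg_zero]; exact Or.inr ⟨v, hinf⟩)

theorem neg_notMem_pos {v : G.Vx} {γ : M} (hγ : γ ∈ G.pos v) : -γ ∉ G.pos v := by
  intro hnγ
  rw [h.pos_eq] at hγ hnγ
  exact (h.basis v).salient_lexCone ∅ γ hγ.2 (fun h0 => h.zero_notMem_R (h0 ▸ hγ.1)) hnγ.2

theorem pos_of_adj {v w : G.Vx} {α : M} (hα : G.adj v w α) :
    G.pos w = insert α (G.pos v \ {-α}) := by
  have hvw := h.step v w α hα
  have hwv := h.step w v (-α) (h.adj_symm hα)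
  ext γ
  have hw := Set.ext_iff.mp hvw γ
  have hv := Set.ext_iff.mp hwv γ
  simp only [Set.mem_sdiff, Set.mem_singleton_iff, Set.mem_insert_iff] at hw hv ⊢
  tauto

theorem mem_pos_or_neg_mem_pos {γ : M} (hγ : γ ∈ G.R) (v : G.Vx) :
    γ ∈ G.pos v ∨ -γ ∈ G.pos v := by
  obtain ⟨v₀, hv₀⟩ : ∃ v₀, γ ∈ G.pos v₀ := by
    rcases hγ with ⟨v₁, v₂, hγ⟩ | ⟨v₁, hinf⟩
    · exact ⟨v₂, h.mem_pos_of_adj_s8 hγ⟩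
    · obtain ⟨i, rfl⟩ := (h.ingoing v₁ γ).mp (Or.inr hinf)
      exact ⟨v₁, h.basisAt_mem_pos v₁ i⟩
  induction h.connected v₀ v with
  | refl => exact Or.inl hv₀
  | tail _ hadj ih =>
    obtain ⟨α, hα⟩ := hadj
    rw [h.pos_of_adj hα]
    by_cases hγα : γ = -α
    · simp [hγα]
    by_cases hnγα : -γ = -α
    · simp [neg_injective hnγα]
    · simp only [Set.mem_insert_iff, Set.mem_sdiff, Set.mem_singleton_iff]
      tauto

theorem pos_eq_of_subset {C : PointedCone ℝ M} (hC : (C : ConvexCone ℝ M).Salient) {u : G.Vx}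
    (hu : G.pos u ⊆ C) : G.pos u = G.R ∩ C := by
  refine subset_antisymm (fun γ hγ => ⟨hγ.1, hu hγ⟩) fun γ ⟨hγR, hγC⟩ => ?_
  refine (h.mem_pos_or_neg_mem_pos hγR u).resolve_right fun hnγ => ?_
  exact hC γ hγC (fun h0 => h.zero_notMem_R (h0 ▸ hγR)) (hu hnγ)

theorem exists_basisAt_eq_neg {v w : G.Vx} {α : M} (hα : G.adj v w α) :
    ∃ i, G.basisAt v i = -α := by
  obtain ⟨i, hi⟩ := (h.ingoing v (-α)).mp (Or.inl ⟨w, h.adj_symm hα⟩)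
  exact ⟨i, hi.symm⟩

theorem exists_adj_neg_basisAt {y : G.Vx} {i : Fin d} (hR : -G.basisAt y i ∈ G.R) :
    ∃ w, G.adj y w (-G.basisAt y i) := by
  rcases (h.ingoing y _).mpr ⟨i, rfl⟩ with ⟨w, hw⟩ | hinf
  · exact ⟨w, h.adj_symm hw⟩
  · exact absurd hR (h.inf_noninv y _ hinf)

theorem eq_of_adj_of_adj_s8 {v w w' : G.Vx} {α : M} (hw : G.adj v w α) (hw' : G.adj v w' α) :
    w = w' :=
  h.posdet w w' (by rw [h.pos_of_adj hw, h.pos_of_adj hw'])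

theorem nonempty_walk (v x : G.Vx) : Nonempty (G.Walk v x) := by
  induction h.connected x v with
  | refl => exact ⟨Walk.nil x⟩
  | tail _ hadj ih =>
    obtain ⟨α, hα⟩ := hadj
    obtain ⟨p⟩ := ih
    exact ⟨Walk.cons _ (h.adj_symm hα) p⟩

theorem exists_walk_length_eq_dist (v x : G.Vx) : ∃ p : G.Walk v x, p.length = G.dist v x := by
  obtain ⟨p⟩ := h.nonempty_walk v x
  exact Nat.sInf_mem (s := {n | ∃ p : G.Walk v x, p.length = n}) ⟨p.length, p, rfl⟩

theorem length_eq_dist_of_cons {v w x : G.Vx} {α : M} {hα : G.adj v w α} {p : G.Walk w x}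
    (hp : (Walk.cons α hα p).length = G.dist v x) : p.length = G.dist w x := by
  obtain ⟨q, hq⟩ := h.exists_walk_length_eq_dist w x
  have hvx := dist_le_length (Walk.cons α hα q)
  have hwx := dist_le_length p
  simp only [Walk.length_cons] at hp hvx
  omega

theorem pos_diff_of_adj {C : Set M} {y w : G.Vx} {α : M} (hα : G.adj y w α) (hαC : α ∈ C) :
    G.pos w \ C = (G.pos y \ C) \ {-α} := by
  rw [h.pos_of_adj hα, Set.insert_sdiff_of_mem _ hαC, sdiff_right_comm]

theorem encard_pos_diff_le_length {v x : G.Vx} (p : G.Walk v x) :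
    (G.pos v \ G.pos x).encard ≤ p.length := by
  induction p with
  | nil => simp
  | @cons v w x α hα p ih =>
    have hsub : G.pos v \ G.pos x ⊆ insert (-α) (G.pos w \ G.pos x) := by
      rw [h.pos_of_adj (h.adj_symm hα), neg_neg]
      intro γ
      simp only [Set.mem_sdiff, Set.mem_insert_iff, Set.mem_singleton_iff]
      tauto
    calc (G.pos v \ G.pos x).encard ≤ (G.pos w \ G.pos x).encard + 1 :=
          (Set.encard_le_encard hsub).trans (Set.encard_insert_le _ _)
      _ ≤ (Walk.cons α hα p).length := by simpa using ih

theorem finite_pos_diff (v x : G.Vx) : (G.pos v \ G.pos x).Finite := by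
  obtain ⟨p⟩ := h.nonempty_walk v x
  exact (Set.encard_le_coe_iff_finite_ncard_le.mp (h.encard_pos_diff_le_length p)).1

theorem exists_adj_neg_basisAt_notMem {C : PointedCone ℝ M} {y : G.Vx}
    (hR : ∀ γ ∈ G.pos y \ C, -γ ∈ G.R) (hne : (G.pos y \ C).Nonempty) :
    ∃ i w, G.basisAt y i ∉ C ∧ G.adj y w (-G.basisAt y i) := by
  obtain ⟨i, hi⟩ : ∃ i, G.basisAt y i ∉ C := by
    by_contra! hC
    obtain ⟨γ, hγ, hγC⟩ := hne
    refine hγC ((h.basis y).mem_of_repr_nonneg ?_ fun k _ => h.basis_apply y k ▸ hC k)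
    exact (Basis.mem_lexCone_empty _).mp (h.pos_eq y ▸ hγ).2
  obtain ⟨w, hw⟩ := h.exists_adj_neg_basisAt (hR _ ⟨h.basisAt_mem_pos y i, hi⟩)
  exact ⟨i, w, hi, hw⟩

theorem exists_walk_pos_eq {C : PointedCone ℝ M} (hC : (C : ConvexCone ℝ M).Salient)
    {y : G.Vx} (hfin : (G.pos y \ C).Finite) (hneg : ∀ γ ∈ G.pos y \ C, -γ ∈ G.R ∩ C) :
    ∃ u, ∃ p : G.Walk y u, p.length = (G.pos y \ C).ncard ∧ G.pos u = G.R ∩ C ∧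
      ∀ α ∈ p.roots, -α ∈ G.pos y \ C := by
  induction hn : (G.pos y \ C).ncard generalizing y with
  | zero =>
    refine ⟨y, .nil y, rfl, h.pos_eq_of_subset hC ?_, by simp [Walk.roots]⟩
    exact Set.sdiff_eq_empty.mp ((Set.ncard_eq_zero hfin).mp hn)
  | succ n ih =>
    obtain ⟨i, w, hiC, hw⟩ := h.exists_adj_neg_basisAt_notMem (fun γ hγ => (hneg γ hγ).1)
      (Set.nonempty_of_ncard_ne_zero (by omega))
    have hiy : G.basisAt y i ∈ G.pos y \ C := ⟨h.basisAt_mem_pos y i, hiC⟩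
    have hdiff := h.pos_diff_of_adj hw (hneg _ hiy).2
    rw [neg_neg] at hdiff
    have hsub : G.pos w \ C ⊆ G.pos y \ C := hdiff ▸ Set.sdiff_subset
    obtain ⟨u, p, hlen, hpos, hroots⟩ := ih (hfin.subset hsub) (fun γ hγ => hneg γ (hsub hγ))
      (by rw [hdiff, Set.ncard_sdiff_singleton_of_mem hiy, hn]; rfl)
    refine ⟨u, .cons _ hw p, by simp [hlen], hpos, ?_⟩
    simp only [Walk.roots_cons, List.mem_cons, forall_eq_or_imp, neg_neg]
    exact ⟨hiy, fun α hα => hsub (hroots α hα)⟩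

theorem exists_walk_cons_pos_eq {C : PointedCone ℝ M} (hC : (C : ConvexCone ℝ M).Salient)
    {y w : G.Vx} {α : M} (hα : G.adj y w α) (hαC : α ∈ C) (hfin : (G.pos y \ C).Finite)
    (hneg : ∀ γ ∈ G.pos y \ C, -γ ∈ G.R ∩ C) :
    ∃ u, ∃ p : G.Walk w u, (Walk.cons α hα p).length = (G.pos y \ C).ncard ∧
      G.pos u = G.R ∩ C ∧ ∀ β ∈ (Walk.cons α hα p).roots, -β ∈ G.pos y \ C := by
  have hα0 : α ≠ 0 := fun h0 => h.zero_notMem_R (h0 ▸ Or.inl ⟨y, w, hα⟩)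
  have hαy : -α ∈ G.pos y \ C := ⟨h.mem_pos_of_adj_s8 (h.adj_symm hα), hC α hαC hα0⟩
  have hdiff := h.pos_diff_of_adj hα hαC
  have hsub : G.pos w \ C ⊆ G.pos y \ C := hdiff ▸ Set.sdiff_subset
  obtain ⟨u, p, hlen, hpos, hroots⟩ :=
    h.exists_walk_pos_eq hC (hfin.subset hsub) fun γ hγ => hneg γ (hsub hγ)
  refine ⟨u, p, ?_, hpos, ?_⟩
  · rw [Walk.length_cons, hlen, hdiff, Set.ncard_sdiff_singleton_add_one hαy hfin]
  · simp only [Walk.roots_cons, List.mem_cons, forall_eq_or_imp]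
    exact ⟨hαy, fun β hβ => hsub (hroots β hβ)⟩

theorem dist_eq_ncard (v x : G.Vx) : G.dist v x = (G.pos v \ G.pos x).ncard := by
  refine le_antisymm ?_ ?_
  · have hdiff : G.pos v \ (h.basis x).lexCone ∅ = G.pos v \ G.pos x := by
      ext γ
      simp only [Set.mem_sdiff, h.pos_eq, Set.mem_inter_iff]
      tauto
    have hneg : ∀ γ ∈ G.pos v \ G.pos x, -γ ∈ G.pos x := fun γ hγ =>
      (h.mem_pos_or_neg_mem_pos hγ.1.1 x).resolve_left hγ.2
    obtain ⟨u, p, hlen, hpos, -⟩ := h.exists_walk_pos_eq ((h.basis x).salient_lexCone ∅)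
      (hdiff ▸ h.finite_pos_diff v x) (hdiff ▸ h.pos_eq x ▸ hneg)
    obtain rfl : u = x := h.posdet u x (hpos.trans (h.pos_eq x).symm)
    exact hdiff ▸ hlen ▸ dist_le_length p
  · obtain ⟨p, hp⟩ := h.exists_walk_length_eq_dist v x
    exact hp ▸ (Set.encard_le_coe_iff_finite_ncard_le.mp (h.encard_pos_diff_le_length p)).2

theorem dist_add_dist_eq {v u x : G.Vx} (hu : G.pos v ∩ G.pos x ⊆ G.pos u) :
    G.dist v u + G.dist u x = G.dist v x := by
  have hux : G.pos u \ G.pos x ⊆ G.pos v := fun γ ⟨hγu, hγx⟩ => by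
    by_contra hγv
    have hnv := (h.mem_pos_or_neg_mem_pos hγu.1 v).resolve_left hγv
    have hnx := (h.mem_pos_or_neg_mem_pos hγu.1 x).resolve_left hγx
    exact h.neg_notMem_pos hγu (hu ⟨hnv, hnx⟩)
  have hsplit : G.pos v \ G.pos x = (G.pos v \ G.pos u) ∪ (G.pos u \ G.pos x) := by
    ext γ
    have hγu := @hu γ
    have hγv := @hux γ
    simp only [Set.mem_sdiff, Set.mem_union, Set.mem_inter_iff] at hγu hγv ⊢
    tauto
  rw [h.dist_eq_ncard, h.dist_eq_ncard, h.dist_eq_ncard, hsplit,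
    Set.ncard_union_eq (Set.disjoint_left.mpr fun γ h₁ h₂ => h₁.2 h₂.1)
      (h.finite_pos_diff v u) (h.finite_pos_diff u x)]

theorem mem_pos_of_length_cons_eq_dist {v w x : G.Vx} {α : M} {hα : G.adj v w α}
    {p : G.Walk w x} (hp : (Walk.cons α hα p).length = G.dist v x) : α ∈ G.pos x := by
  by_contra hαx
  have hnα := (h.mem_pos_or_neg_mem_pos (Or.inl ⟨v, w, hα⟩) x).resolve_left hαx
  have hle := Set.ncard_sdiff_singleton_le (G.pos w \ G.pos x) (- -α)
  rw [← h.pos_diff_of_adj (h.adj_symm hα) hnα, ← h.dist_eq_ncard, ← h.dist_eq_ncard,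
    ← h.length_eq_dist_of_cons hp, ← hp, Walk.length_cons] at hle
  omega

theorem pos_diff_lexCone (v : G.Vx) (s : Set (Fin d)) :
    G.pos v \ (h.basis v).lexCone s = G.pos v ∩ Submodule.span ℝ (h.basis v '' s) := by
  ext γ
  refine and_congr_right fun hγ => ?_
  rw [h.pos_eq] at hγ
  rw [SetLike.mem_coe, SetLike.mem_coe,
    (h.basis v).notMem_lexCone_iff ((Basis.mem_lexCone_empty _).mp hγ.2)]
  exact and_iff_left fun h0 => h.zero_notMem_R (h0 ▸ hγ.1)

theorem neg_mem_pos_of_mem_span {v x : G.Vx} {s : Set (Fin d)}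
    (hs : ∀ k ∈ s, -G.basisAt v k ∈ G.pos x) {γ : M}
    (hγ : γ ∈ G.pos v ∩ Submodule.span ℝ (h.basis v '' s)) : -γ ∈ G.pos x := by
  rw [h.pos_eq] at hγ hs
  have hcone : -γ ∈ (h.basis x).lexCone ∅ := by
    refine Submodule.mem_neg.mp ((h.basis v).mem_of_repr_nonneg
      ((Basis.mem_lexCone_empty _).mp hγ.1.2) fun k hk => Submodule.mem_neg.mpr ?_)
    exact h.basis_apply v k ▸ (hs k ((h.basis v).mem_span_image.mp hγ.2 hk)).2
  refine (h.mem_pos_or_neg_mem_pos hγ.1.1 x).resolve_left fun hγx => ?_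
  rw [h.pos_eq] at hγx
  exact (h.basis x).salient_lexCone ∅ γ hγx.2 (fun h0 => h.zero_notMem_R (h0 ▸ hγ.1.1)) hcone

theorem R_inter_eq {v : G.Vx} {W : Submodule ℝ M} (hR : ∀ γ ∈ G.pos v ∩ W, -γ ∈ G.R) :
    G.R ∩ W = (G.pos v ∩ W) ∪ -(G.pos v ∩ W) := by
  ext γ
  constructor
  · rintro ⟨hγR, hγW⟩
    rcases h.mem_pos_or_neg_mem_pos hγR v with hγ | hγ
    · exact Or.inl ⟨hγ, hγW⟩
    · exact Or.inr ⟨hγ, W.neg_mem hγW⟩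
  · rintro (hγ | hγ)
    · exact ⟨hγ.1.1, hγ.2⟩
    · exact ⟨neg_neg γ ▸ hR _ hγ, neg_neg γ ▸ W.neg_mem hγ.2⟩

theorem elemBraid_of_neg_roots_mem {v u : G.Vx} {W : Submodule ℝ M}
    (hW : finrank ℝ W = 2) (hfin : (G.pos v ∩ W).Finite) (hR : ∀ γ ∈ G.pos v ∩ W, -γ ∈ G.R)
    {p q : G.Walk v u} (hp : ∀ α ∈ p.roots, -α ∈ G.pos v ∩ W)
    (hq : ∀ α ∈ q.roots, -α ∈ G.pos v ∩ W) (hplen : p.length = (G.pos v ∩ W).ncard)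
    (hqlen : q.length = (G.pos v ∩ W).ncard) (hdist : G.dist v u = (G.pos v ∩ W).ncard) :
    G.ElemBraid p q := by
  have hdisj : Disjoint (G.pos v ∩ W) (-(G.pos v ∩ W)) :=
    Set.disjoint_left.mpr fun γ hγ hnγ => h.neg_notMem_pos hγ.1 hnγ.1
  refine ⟨W, hW, fun α hα => neg_neg α ▸ W.neg_mem (hp α hα).2,
    fun α hα => neg_neg α ▸ W.neg_mem (hq α hα).2, ?_, ?_, hqlen.trans hplen.symm,
    hplen.trans hdist.symm⟩
  · rw [h.R_inter_eq hR]
    exact hfin.union hfin.neg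
  · rw [h.R_inter_eq hR, Set.ncard_union_eq hdisj hfin hfin.neg, Set.ncard_neg, hplen]
    ring

theorem exists_elemBraid {v wa wb x : G.Vx} {a b : M} (ha : G.adj v wa a)
    (hb : G.adj v wb b) (hab : a ≠ b) (hax : a ∈ G.pos x) (hbx : b ∈ G.pos x) :
    ∃ u, ∃ (pa : G.Walk wa u) (pb : G.Walk wb u),
      G.ElemBraid (Walk.cons a ha pa) (Walk.cons b hb pb) ∧ G.pos v ∩ G.pos x ⊆ G.pos u := by
  obtain ⟨i, hi⟩ := h.exists_basisAt_eq_neg ha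
  obtain ⟨j, hj⟩ := h.exists_basisAt_eq_neg hb
  have hij : i ≠ j := fun hij => hab (neg_injective (hi ▸ hj ▸ hij ▸ rfl))
  set W := Submodule.span ℝ (h.basis v '' {i, j})
  set C := (h.basis v).lexCone {i, j}
  have hS := h.pos_diff_lexCone v {i, j}
  have hSx : ∀ γ ∈ G.pos v ∩ W, -γ ∈ G.pos x := fun γ hγ =>
    h.neg_mem_pos_of_mem_span (by rintro k (rfl | rfl) <;> simpa [hi, hj]) hγ
  have hSC : ∀ γ ∈ G.pos v ∩ W, -γ ∈ C := fun γ hγ => (h.basis v).neg_mem_lexCone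
    ((Basis.mem_lexCone_empty _).mp (h.pos_eq v ▸ hγ.1).2) hγ.2
  have hfin : (G.pos v ∩ W).Finite := (h.finite_pos_diff v x).subset fun γ hγ =>
    ⟨hγ.1, fun hγx => h.neg_notMem_pos hγx (hSx γ hγ)⟩
  have hneg : ∀ γ ∈ G.pos v \ C, -γ ∈ G.R ∩ C := hS ▸ fun γ hγ => ⟨(hSx γ hγ).1, hSC γ hγ⟩
  have hbasis : ∀ k ∈ ({i, j} : Set (Fin d)), G.basisAt v k ∈ G.pos v ∩ W := fun k hk =>
    ⟨h.basisAt_mem_pos v k, h.basis_apply v k ▸ Submodule.subset_span (Set.mem_image_of_mem _ hk)⟩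
  have haC : a ∈ C := by simpa [hi] using hSC _ (hbasis i (by simp))
  have hbC : b ∈ C := by simpa [hj] using hSC _ (hbasis j (by simp))
  have hSC' := (h.basis v).salient_lexCone {i, j}
  obtain ⟨u, pa, hpa, hposu, hpa'⟩ := h.exists_walk_cons_pos_eq hSC' ha haC (hS ▸ hfin) hneg
  obtain ⟨u', pb, hpb, hposu', hpb'⟩ := h.exists_walk_cons_pos_eq hSC' hb hbC (hS ▸ hfin) hneg
  obtain rfl : u = u' := h.posdet _ _ (hposu.trans hposu'.symm)
  have hdist : G.dist v u = (G.pos v \ C).ncard := by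
    rw [h.dist_eq_ncard, hposu, Set.sdiff_inter, Set.sdiff_eq_empty.mpr (pos_subset_R v),
      Set.empty_union]
  rw [hS] at hpa hpb hpa' hpb' hdist
  refine ⟨u, pa, pb, h.elemBraid_of_neg_roots_mem ((h.basis v).finrank_span_image_pair hij) hfin
    (fun γ hγ => (hSx γ hγ).1) hpa' hpb' hpa hpb hdist, ?_⟩
  rw [hposu]
  refine fun γ ⟨hγv, hγx⟩ => ⟨hγx.1, by_contra fun hγC => ?_⟩
  exact h.neg_notMem_pos hγx (hSx γ (hS ▸ ⟨hγv, hγC⟩))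

theorem exists_braidEquiv_cons_cons {v wa wb x : G.Vx} {a b : M}
    (ha : G.adj v wa a) (hb : G.adj v wb b) (hab : a ≠ b) (hax : a ∈ G.pos x)
    (hbx : b ∈ G.pos x) :
    ∃ (pa : G.Walk wa x) (pb : G.Walk wb x), pa.length = G.dist wa x ∧
      pb.length = G.dist wb x ∧ G.BraidEquiv (.cons a ha pa) (.cons b hb pb) := by
  obtain ⟨u, pa, pb, hbraid, hu⟩ := h.exists_elemBraid ha hb hab hax hbx
  obtain ⟨r, hr⟩ := h.exists_walk_length_eq_dist u x
  have hvux := h.dist_add_dist_eq hu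
  obtain ⟨-, -, -, -, -, -, hlen, hdist⟩ := id hbraid
  refine ⟨pa.append r, pb.append r, h.length_eq_dist_of_cons (hα := ha) ?_,
    h.length_eq_dist_of_cons (hα := hb) ?_, (BraidEquiv.elem hbraid).append (.refl r)⟩ <;>
  · simp only [Walk.length_cons, Walk.length_append] at hlen hdist ⊢
    omega

end Axioms

end MatsumotoGraph

/-- Generalized Matsumoto theorem: any two shortest paths between two vertices of a
Matsumoto graph are braid equivalent. -/
theorem matsumoto_braid_equiv {d : ℕ} {M : Type*} [AddCommGroup M] [Module ℝ M]
    (G : MatsumotoGraph d M) (hG : G.Axioms) {v v' : G.Vx}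
    (p q : G.Walk v v') (hp : p.length = G.dist v v') (hq : q.length = G.dist v v') :
    G.BraidEquiv p q := by
  induction hn : G.dist v v' using Nat.strong_induction_on generalizing v with
  | _ n ih =>
  cases p with
  | nil =>
    cases q with
    | nil => exact .refl _
    | cons => exact absurd (hp.trans hq.symm) (by simp [MatsumotoGraph.Walk.length])
  | @cons _ wa _ a ha p₁ =>
    cases q with
    | nil => exact absurd (hp.trans hq.symm) (by simp [MatsumotoGraph.Walk.length])
    | @cons _ wb _ b hb q₁ =>
      have hp₁ := hG.length_eq_dist_of_cons hp
      have hq₁ := hG.length_eq_dist_of_cons hq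
      have hax := hG.mem_pos_of_length_cons_eq_dist hp
      have hbx := hG.mem_pos_of_length_cons_eq_dist hq
      simp only [MatsumotoGraph.Walk.length_cons] at hp hq
      by_cases hab : a = b
      · subst hab
        obtain rfl := hG.eq_of_adj_of_adj_s8 ha hb
        exact (ih _ (by omega) p₁ q₁ hp₁ hq₁ rfl).cons ha
      obtain ⟨pa, pb, hpa, hpb, hbraid⟩ := hG.exists_braidEquiv_cons_cons ha hb hab hax hbx
      exact ((ih _ (by omega) p₁ pa hp₁ hpa rfl).cons ha).trans
        (hbraid.trans ((ih _ (by omega) q₁ pb hq₁ hpb rfl).cons hb).symm)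
end

section
/- For the Cayley graph of a Coxeter system (G,X) with respect to the generating set X, the geometric representation σ: G → GL(V) on V = Span_ℝ{α_x : x ∈ X} yields a geometric realization: assigning to an arrow x: g → gx the ray ℝ_{≥0}·σ_g(α_x) satisfies all four Matsumoto-graph axioms, with R⁺_g spanned by -σ_g(α_x), x ∈ X. -/
open CoxeterSystem Real Polynomial.Chebyshev

theorem Module.Basis.exists_nonneg_sum_iff {ι V : Type*} [Fintype ι] [AddCommGroup V] [Module ℝ V]
    (b : Module.Basis ι ℝ V) (v : V) :
    (∃ c : ι → ℝ, (∀ i, 0 ≤ c i) ∧ v = ∑ i, c i • b i) ↔ ∀ i, 0 ≤ b.repr v i := by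
  constructor
  · rintro ⟨c, hc, rfl⟩ i
    rw [b.repr_sum_self]
    exact hc i
  · exact fun h => ⟨_, h, (b.sum_repr v).symm⟩

theorem Polynomial.Chebyshev.U_eval_cos_pi_div_nonneg (m : ℕ) {n : ℤ} (hn : -1 ≤ n)
    (hnm : m = 0 ∨ n + 1 ≤ m) : 0 ≤ (U ℝ n).eval (cos (π / m)) := by
  rcases hnm with rfl | hnm
  · simp only [CharP.cast_eq_zero, div_zero, cos_zero, U_eval_one]
    exact_mod_cast (by omega : (0 : ℤ) ≤ n + 1)
  obtain rfl | hn : n = -1 ∨ 0 ≤ n := by omega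
  · simp
  obtain rfl | hm : m = 1 ∨ 2 ≤ m := by omega
  · obtain rfl : n = 0 := by omega
    simp
  have hθ : 0 < sin (π / m) := by
    apply sin_pos_of_pos_of_lt_pi (by positivity)
    rw [div_lt_iff₀ (by positivity)]
    have : (2 : ℝ) ≤ m := by exact_mod_cast hm
    nlinarith [pi_pos]
  have hsin : 0 ≤ sin ((n + 1) * (π / m)) := by
    apply sin_nonneg_of_nonneg_of_le_pi
    · have : (0 : ℝ) ≤ n + 1 := by exact_mod_cast (by omega : (0 : ℤ) ≤ n + 1)
      positivity
    · rw [← mul_div_assoc, div_le_iff₀ (by positivity)]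
      have : ((n + 1 : ℤ) : ℝ) ≤ m := by exact_mod_cast hnm
      push_cast at this
      nlinarith [pi_pos]
  rw [← U_real_cos] at hsin
  exact nonneg_of_mul_nonneg_left hsin hθ

namespace CoxeterSystem

variable {B W : Type*} [Group W] {M : CoxeterMatrix B} (cs : CoxeterSystem M W)

theorem exists_alternatingWord_suffix {w : W} {t : B} (ht : cs.IsRightDescent w t) (x : B) :
    ∃ (u : W) (n : ℕ), 0 < n ∧ w = u * cs.wordProd (alternatingWord x t n) ∧
      cs.length w = cs.length u + n ∧ ¬cs.IsRightDescent u x ∧ ¬cs.IsRightDescent u t := by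
  induction hl : cs.length w using Nat.strong_induction_on generalizing w x t with
  | _ l ih =>
  subst hl
  have hwt := cs.isRightDescent_iff.mp ht
  by_cases hx : cs.IsRightDescent (w * cs.simple t) x
  · obtain ⟨u, n, -, hu, hlen, hux, hut⟩ := ih _ (by omega) hx t rfl
    refine ⟨u, n + 1, n.succ_pos, ?_, by omega, hut, hux⟩
    rw [alternatingWord_succ, List.concat_eq_append, cs.wordProd_append, cs.wordProd_singleton,
      ← mul_assoc, ← hu, cs.simple_mul_simple_cancel_right]
  · refine ⟨w * cs.simple t, 1, one_pos, ?_, by omega, hx, ?_⟩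
    · simp [alternatingWord]
    · rwa [← cs.isRightDescent_iff_not_isRightDescent_mul]

variable [Fintype B] [DecidableEq B] (σ : W →* ((B → ℝ) ≃ₗ[ℝ] (B → ℝ)))

local notation "α" i:max => (Pi.single i 1 : _ → ℝ)

/-- `M s t = 0` encodes `m_{st} = ∞`: then `π / 0 = 0` and the coefficient is `2 = 2 cos 0`. -/
def IsGeometricRepresentation : Prop :=
  ∀ s t : B, σ (cs.simple s) (α t) = α t + (2 * cos (π / M s t)) • α s

noncomputable def cosineForm (M : CoxeterMatrix B) : LinearMap.BilinForm ℝ (B → ℝ) :=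
  Matrix.toBilin' (Matrix.of fun i j => -cos (π / M i j))

theorem cosineForm_single (i j : B) : cosineForm M (α i) (α j) = -cos (π / M i j) := by
  simp [cosineForm]

theorem cosineForm_comm (v w : B → ℝ) : cosineForm M v w = cosineForm M w v := by
  simp only [cosineForm, Matrix.toBilin'_apply, Matrix.of_apply]
  rw [Finset.sum_comm]
  refine Finset.sum_congr rfl fun i _ => Finset.sum_congr rfl fun j _ => ?_
  rw [M.symmetric]; ring

variable {cs σ}

theorem IsGeometricRepresentation.simple_apply (hσ : IsGeometricRepresentation cs σ) (s : B)
    (v : B → ℝ) : σ (cs.simple s) v = v - (2 * cosineForm M (α s) v) • α s := by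
  have key : (σ (cs.simple s)).toLinearMap =
      LinearMap.id - (2 • cosineForm M (α s)).smulRight (α s) := by
    refine (Pi.basisFun ℝ B).ext fun t => ?_
    simp only [Pi.basisFun_apply, LinearEquiv.coe_coe, hσ s t, LinearMap.sub_apply,
      LinearMap.id_apply, LinearMap.smulRight_apply, LinearMap.smul_apply, cosineForm_single]
    module
  simpa using congrArg (· v) key

theorem IsGeometricRepresentation.simple_apply_self (hσ : IsGeometricRepresentation cs σ)
    (s : B) : σ (cs.simple s) (α s) = -α s := by
  rw [hσ.simple_apply, cosineForm_single]
  norm_num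
  module

theorem IsGeometricRepresentation.simple_apply_of_ne (hσ : IsGeometricRepresentation cs σ)
    {s b : B} (hb : b ≠ s) (v : B → ℝ) : σ (cs.simple s) v b = v b := by
  simp [hσ.simple_apply, hb]

theorem IsGeometricRepresentation.cosineForm_apply_apply (hσ : IsGeometricRepresentation cs σ)
    (w : W) (u v : B → ℝ) : cosineForm M (σ w u) (σ w v) = cosineForm M u v := by
  obtain ⟨l, rfl⟩ := cs.wordProd_surjective w
  induction l generalizing u v with
  | nil => simp
  | cons s l ih =>
    have hss : cosineForm M (α s) (α s) = 1 := by simp [cosineForm_single]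
    simp only [cs.wordProd_cons, map_mul, LinearEquiv.mul_apply, hσ.simple_apply, map_sub,
      map_smul, LinearMap.sub_apply, LinearMap.smul_apply, smul_eq_mul, hss, ih]
    rw [cosineForm_comm (σ _ u)]
    ring

theorem IsGeometricRepresentation.cosineForm_root_self (hσ : IsGeometricRepresentation cs σ)
    (w : W) (s : B) : cosineForm M (σ w (α s)) (σ w (α s)) = 1 := by
  simp [hσ.cosineForm_apply_apply, cosineForm_single]

theorem IsGeometricRepresentation.simple_apply_smul_add_smul
    (hσ : IsGeometricRepresentation cs σ) (p q : B) (a b : ℝ) :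
    σ (cs.simple q) (a • α p + b • α q) = a • α p + (2 * cos (π / M p q) * a - b) • α q := by
  rw [map_add, map_smul, map_smul, hσ q p, hσ.simple_apply_self, M.symmetric]
  module

theorem IsGeometricRepresentation.wordProd_alternatingWord_apply
    (hσ : IsGeometricRepresentation cs σ) (x t : B) (n : ℕ) :
    σ (cs.wordProd (alternatingWord x t n)) (α x) =
      (U ℝ n).eval (cos (π / M x t)) • α (if Even n then x else t) +
        (U ℝ (n - 1)).eval (cos (π / M x t)) • α (if Even n then t else x) := by
  induction n with
  | zero => simp [alternatingWord]
  | succ n ih =>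
    rw [alternatingWord_succ', cs.wordProd_cons, map_mul, LinearEquiv.mul_apply, ih]
    have hU : (U ℝ (n + 1)).eval (cos (π / M x t)) = 2 * cos (π / M x t) *
        (U ℝ n).eval (cos (π / M x t)) - (U ℝ (n - 1)).eval (cos (π / M x t)) := by
      simp [U_add_one, mul_assoc]
    by_cases hn : Even n
    · simp only [hn, if_true, Nat.even_add_one, not_true_eq_false, if_false,
        hσ.simple_apply_smul_add_smul, Nat.cast_add_one, add_sub_cancel_right, hU]
      rw [add_comm]
    · simp only [hn, if_true, Nat.even_add_one, not_false_eq_true, if_false,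
        hσ.simple_apply_smul_add_smul, Nat.cast_add_one, add_sub_cancel_right, hU, M.symmetric t x]
      rw [add_comm]

theorem IsGeometricRepresentation.simpleRoot_nonneg (hσ : IsGeometricRepresentation cs σ)
    {w : W} {x : B} (hx : ¬cs.IsRightDescent w x) : 0 ≤ σ w (α x) := by
  induction hl : cs.length w using Nat.strong_induction_on generalizing w x with
  | _ l ih =>
  subst hl
  by_cases hw : w = 1
  · simp [hw, Pi.single_nonneg]
  obtain ⟨t, ht⟩ := cs.exists_rightDescent_of_ne_one hw
  obtain ⟨u, n, hn, rfl, hlen, hux, hut⟩ := cs.exists_alternatingWord_suffix ht x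
  have hred : cs.IsReduced (alternatingWord t x (n + 1)) := by
    have hprod : cs.wordProd (alternatingWord t x (n + 1)) =
        cs.wordProd (alternatingWord x t n) * cs.simple x := by
      rw [alternatingWord_succ, List.concat_eq_append, cs.wordProd_append, cs.wordProd_singleton]
    have hle := cs.length_wordProd_le (alternatingWord t x (n + 1))
    have hge := cs.length_mul_le u (cs.wordProd (alternatingWord t x (n + 1)))
    rw [hprod, ← mul_assoc, cs.not_isRightDescent_iff.mp hx] at hge
    rw [length_alternatingWord, hprod] at hle
    rw [IsReduced, length_alternatingWord, hprod]
    omega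
  have hm : M x t = 0 ∨ (n : ℤ) + 1 ≤ M x t := by
    rw [M.symmetric]
    by_contra! h
    exact cs.not_isReduced_alternatingWord t x h.1 (by omega) hred
  have hU₀ := U_eval_cos_pi_div_nonneg (M x t) (n := n) (by omega) (by omega)
  have hU₁ := U_eval_cos_pi_div_nonneg (M x t) (n := n - 1) (by omega) (by omega)
  have hux' := ih (cs.length u) (by omega) hux rfl
  have hut' := ih (cs.length u) (by omega) hut rfl
  rw [map_mul, LinearEquiv.mul_apply, hσ.wordProd_alternatingWord_apply, map_add, map_smul,
    map_smul]
  split_ifs <;> exact add_nonneg (smul_nonneg hU₀ ‹_›) (smul_nonneg hU₁ ‹_›)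

theorem IsGeometricRepresentation.simpleRoot_nonpos (hσ : IsGeometricRepresentation cs σ)
    {w : W} {x : B} (hx : cs.IsRightDescent w x) : σ w (α x) ≤ 0 := by
  have h := hσ.simpleRoot_nonneg (cs.isRightDescent_iff_not_isRightDescent_mul.mp hx)
  rwa [map_mul, LinearEquiv.mul_apply, hσ.simple_apply_self, map_neg, neg_nonneg] at h

theorem IsGeometricRepresentation.simpleRoot_nonneg_or_nonpos
    (hσ : IsGeometricRepresentation cs σ) (w : W) (x : B) :
    0 ≤ σ w (α x) ∨ σ w (α x) ≤ 0 := by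
  by_cases hx : cs.IsRightDescent w x
  · exact .inr (hσ.simpleRoot_nonpos hx)
  · exact .inl (hσ.simpleRoot_nonneg hx)

theorem IsGeometricRepresentation.apply_mul_simple_simpleRoot
    (hσ : IsGeometricRepresentation cs σ) (g : W) (x : B) :
    σ (g * cs.simple x) (α x) = -σ g (α x) := by
  rw [map_mul, LinearEquiv.mul_apply, hσ.simple_apply_self, map_neg]

theorem IsGeometricRepresentation.eq_simpleRoot_of_simple_apply_nonpos
    (hσ : IsGeometricRepresentation cs σ) {w : W} {x y : B} (hpos : ¬σ w (α y) ≤ 0)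
    (hneg : σ (cs.simple x) (σ w (α y)) ≤ 0) : σ w (α y) = α x := by
  set γ := σ w (α y) with hγ
  have hnonneg : 0 ≤ γ := (hσ.simpleRoot_nonneg_or_nonpos w y).resolve_right hpos
  have hsmul : γ = γ x • α x := by
    funext b
    by_cases hb : b = x
    · simp [hb]
    · have := hneg b
      rw [hσ.simple_apply_of_ne hb] at this
      simp [hb, le_antisymm this (hnonneg b)]
  have hsq : γ x ^ 2 = 1 := by
    have h := hσ.cosineForm_root_self w y
    rw [← hγ, hsmul] at h
    simpa [cosineForm_single, sq] using h
  have hx : γ x = 1 := (pow_eq_one_iff_of_nonneg (hnonneg x) two_ne_zero).mp hsq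
  rw [hsmul, hx, one_smul]

variable (cs σ) in
noncomputable abbrev cayleyGraph : MatsumotoGraph (Fintype.card B) (B → ℝ) where
  Vx := W
  adj := fun g g' β => ∃ x : B, g' = g * cs.simple x ∧ β = σ g (Pi.single x 1 : B → ℝ)
  inf := fun _ _ => False
  basisAt := fun g i => -(σ g (Pi.single ((Fintype.equivFin B).symm i) 1 : B → ℝ))

theorem mem_cayleyGraph_R {β : B → ℝ} :
    β ∈ (cs.cayleyGraph σ).R ↔ ∃ (u : W) (y : B), β = σ u (α y) := by
  constructor
  · rintro (⟨g, -, x, -, rfl⟩ | ⟨-, ⟨⟩⟩)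
    exact ⟨g, x, rfl⟩
  · rintro ⟨u, y, rfl⟩
    exact .inl ⟨u, _, y, rfl, rfl⟩

variable (σ) in
noncomputable def ingoingBasis (g : W) : Module.Basis (Fin (Fintype.card B)) ℝ (B → ℝ) :=
  ((Pi.basisFun ℝ B).reindex (Fintype.equivFin B)).map ((σ g).trans (LinearEquiv.neg ℝ))

variable (cs σ) in
theorem coe_ingoingBasis (g : W) : ⇑(ingoingBasis σ g) = (cs.cayleyGraph σ).basisAt g := by
  funext i
  simp [ingoingBasis]

omit [DecidableEq B] in
theorem ingoingBasis_repr (g : W) (β : B → ℝ) (i : Fin (Fintype.card B)) :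
    (ingoingBasis σ g).repr β i = -σ g⁻¹ β ((Fintype.equivFin B).symm i) := by
  simp [ingoingBasis]

theorem cayleyGraph_inCone_iff {g : W} {β : B → ℝ} :
    (cs.cayleyGraph σ).inCone g β ↔ σ g⁻¹ β ≤ 0 := by
  rw [MatsumotoGraph.inCone, ← coe_ingoingBasis, Module.Basis.exists_nonneg_sum_iff]
  simp only [ingoingBasis_repr, neg_nonneg]
  rw [(Fintype.equivFin B).symm.forall_congr_left, Pi.le_def]
  simp

theorem mem_cayleyGraph_pos {g : W} {β : B → ℝ} :
    β ∈ (cs.cayleyGraph σ).pos g ↔ (∃ (u : W) (y : B), β = σ u (α y)) ∧ σ g⁻¹ β ≤ 0 := by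
  rw [MatsumotoGraph.pos, Set.mem_sep_iff, mem_cayleyGraph_R, cayleyGraph_inCone_iff]

theorem IsGeometricRepresentation.cayleyGraph_adj_symm (hσ : IsGeometricRepresentation cs σ)
    {v v' : W} {β : B → ℝ} (h : (cs.cayleyGraph σ).adj v v' β) :
    (cs.cayleyGraph σ).adj v' v (-β) := by
  obtain ⟨x, rfl, rfl⟩ := h
  exact ⟨x, (cs.simple_mul_simple_cancel_right x).symm, (hσ.apply_mul_simple_simpleRoot v x).symm⟩

theorem IsGeometricRepresentation.cayleyGraph_ingoing (hσ : IsGeometricRepresentation cs σ)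
    (v : W) (β : B → ℝ) :
    (∃ v', (cs.cayleyGraph σ).adj v' v β) ↔ ∃ i, β = (cs.cayleyGraph σ).basisAt v i := by
  constructor
  · rintro ⟨v', x, rfl, rfl⟩
    refine ⟨Fintype.equivFin B x, ?_⟩
    simp [hσ.simple_apply_self]
  · rintro ⟨i, rfl⟩
    refine ⟨v * cs.simple ((Fintype.equivFin B).symm i), (Fintype.equivFin B).symm i,
      (cs.simple_mul_simple_cancel_right _).symm, ?_⟩
    rw [hσ.apply_mul_simple_simpleRoot]

theorem IsGeometricRepresentation.cayleyGraph_step (hσ : IsGeometricRepresentation cs σ)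
    {v v' : W} {β : B → ℝ} (h : (cs.cayleyGraph σ).adj v v' β) :
    (cs.cayleyGraph σ).pos v' \ (cs.cayleyGraph σ).pos v = {β} := by
  obtain ⟨x, rfl, rfl⟩ := h
  ext γ
  simp only [Set.mem_sdiff, Set.mem_singleton_iff, mem_cayleyGraph_pos, mul_inv_rev, inv_simple,
    map_mul, LinearEquiv.mul_apply, not_and]
  constructor
  · rintro ⟨⟨⟨u, y, rfl⟩, hneg⟩, hnot⟩
    have hu : σ v⁻¹ (σ u (α y)) = σ (v⁻¹ * u) (α y) := by rw [map_mul, LinearEquiv.mul_apply]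
    rw [hu] at hneg hnot
    have hsimple := hσ.eq_simpleRoot_of_simple_apply_nonpos (hnot ⟨u, y, rfl⟩) hneg
    rw [← hsimple, ← LinearEquiv.mul_apply, ← map_mul, mul_inv_cancel_left]
  · rintro rfl
    refine ⟨⟨⟨v, x, rfl⟩, ?_⟩, fun _ => ?_⟩
    · simp [hσ.simple_apply_self]
    · simp

theorem IsGeometricRepresentation.cayleyGraph_pos_injective
    (hσ : IsGeometricRepresentation cs σ) : Function.Injective (cs.cayleyGraph σ).pos := by
  intro v v' h
  by_contra hne
  obtain ⟨y, hy⟩ := cs.exists_rightDescent_of_ne_one fun h1 => hne (inv_mul_eq_one.mp h1)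
  have hmem : σ v' (α y) ∈ (cs.cayleyGraph σ).pos v := by
    refine mem_cayleyGraph_pos.mpr ⟨⟨v', y, rfl⟩, ?_⟩
    simpa [LinearEquiv.mul_apply] using hσ.simpleRoot_nonpos hy
  rw [h, mem_cayleyGraph_pos] at hmem
  exact absurd (hmem.2 y) (by simp)

variable (cs σ) in
theorem cayleyGraph_reflTransGen (v : W) (l : List B) :
    Relation.ReflTransGen (fun a b => ∃ β, (cs.cayleyGraph σ).adj a b β) v (v * cs.wordProd l) := by
  induction l generalizing v with
  | nil => rw [cs.wordProd_nil, mul_one]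
  | cons x l ih =>
    rw [cs.wordProd_cons, ← mul_assoc]
    exact .head ⟨_, x, rfl, rfl⟩ (ih _)

end CoxeterSystem

/-- The Cayley graph of a Coxeter system `(G,X)` with the geometric representation
`σ : G → GL(V)` on `V = Span_ℝ{α_x}` (with `σ_s(α_t) = α_t + 2cos(π/m_{st})·α_s`,
where `m_{st} = 0` encodes `∞`) is a Matsumoto graph: the arrow `x : g → gx` carries the
ray of `σ_g(α_x)`, there are no infinite edges, and the ingoing roots at `g` (spanning
`R⁺_g`) are the `-σ_g(α_x)`, `x ∈ X`. All four axioms hold. -/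
theorem cayley_coxeter_matsumoto {B W : Type*} [Fintype B] [DecidableEq B] [Group W]
    {Mx : CoxeterMatrix B} (cs : CoxeterSystem Mx W)
    (σ : W →* ((B → ℝ) ≃ₗ[ℝ] (B → ℝ)))
    (hσ : ∀ s t : B, σ (cs.simple s) (Pi.single t 1 : B → ℝ) =
      (Pi.single t 1 : B → ℝ) + (2 * Real.cos (Real.pi / (Mx s t : ℝ))) • (Pi.single s 1 : B → ℝ)) :
    MatsumotoGraph.Axioms
      { Vx := W
        adj := fun g g' β => ∃ x : B, g' = g * cs.simple x ∧ β = σ g (Pi.single x 1 : B → ℝ)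
        inf := fun _ _ => False
        basisAt := fun g i =>
          -(σ g (Pi.single ((Fintype.equivFin B).symm i) 1 : B → ℝ)) } := by
  have hrep : cs.IsGeometricRepresentation σ := hσ
  exact
    { adj_symm := hrep.cayleyGraph_adj_symm
      basis_indep := fun g => coe_ingoingBasis cs σ g ▸ (ingoingBasis σ g).linearIndependent
      basis_span := fun g => coe_ingoingBasis cs σ g ▸ (ingoingBasis σ g).span_eq
      ingoing := fun g β => (or_iff_left not_false).trans (hrep.cayleyGraph_ingoing g β)
      inf_noninv := fun _ _ h => h.elim
      step := fun _ _ _ h => hrep.cayleyGraph_step h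
      posdet := fun _ _ h => hrep.cayleyGraph_pos_injective h
      connected := fun v v' => by
        obtain ⟨l, hl⟩ := cs.wordProd_surjective (v⁻¹ * v')
        simpa [hl] using cs.cayleyGraph_reflTransGen σ v l }
end

section
/- Let Γ be a Matsumoto graph with set of roots R, viewed as points on the unit sphere of V. If both α and -α belong to R (α invertible), then α is an isolated point of R in the topology of the unit sphere. -/
namespace MatsumotoGraph

variable {d : ℕ} {M : Type*} [AddCommGroup M] [Module ℝ M] {G : MatsumotoGraph d M}

/-- Every basis vector at a vertex lies in the cone at that vertex. -/
lemma mem_inCone_basis (v : G.Vx) (k : Fin d) : G.inCone v (G.basisAt v k) := by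
  classical
  refine ⟨fun m => if m = k then 1 else 0, fun m => by dsimp only; split <;> norm_num, ?_⟩
  simp [ite_smul]

/-- Every root is positive at some vertex (its head). -/
lemma root_mem_pos (hG : G.Axioms) {β : M} (hβ : β ∈ G.R) : ∃ w, β ∈ G.pos w := by
  rcases hβ with ⟨a, b, hab⟩ | ⟨w, hw⟩
  · obtain ⟨k, hk⟩ := (hG.ingoing b β).mp (Or.inl ⟨a, hab⟩)
    exact ⟨b, Or.inl ⟨a, b, hab⟩, hk ▸ mem_inCone_basis b k⟩
  · obtain ⟨k, hk⟩ := (hG.ingoing w β).mp (Or.inr hw)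
    exact ⟨w, Or.inr ⟨w, hw⟩, hk ▸ mem_inCone_basis w k⟩

/-- At every vertex, either a root is positive, or its negative is a root and is
positive there. -/
lemma pos_dichotomy (hG : G.Axioms) {β : M} (hβ : β ∈ G.R) (v : G.Vx) :
    β ∈ G.pos v ∨ (-β ∈ G.R ∧ -β ∈ G.pos v) := by
  obtain ⟨w, hw⟩ := root_mem_pos hG hβ
  have hconn := hG.connected w v
  induction hconn with
  | refl => exact Or.inl hw
  | tail _ e ih =>
    rename_i b c _
    obtain ⟨δ, hδ⟩ := e
    have S1 := hG.step b c δ hδ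
    have S2 := hG.step c b (-δ) (hG.adj_symm hδ)
    have hδR : δ ∈ G.R := Or.inl ⟨b, c, hδ⟩
    have hδc : δ ∈ G.pos c := by
      have : δ ∈ G.pos c \ G.pos b := by rw [S1]; rfl
      exact this.1
    rcases ih with hb | ⟨hnR, hnb⟩
    · by_cases hc : β ∈ G.pos c
      · exact Or.inl hc
      · have hmem : β ∈ G.pos b \ G.pos c := ⟨hb, hc⟩
        rw [S2] at hmem
        have hβδ : β = -δ := hmem
        refine Or.inr ⟨?_, ?_⟩
        · rw [hβδ, neg_neg]; exact hδR
        · rw [hβδ, neg_neg]; exact hδc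
    · by_cases hc : -β ∈ G.pos c
      · exact Or.inr ⟨hnR, hc⟩
      · have hmem : -β ∈ G.pos b \ G.pos c := ⟨hnb, hc⟩
        rw [S2] at hmem
        have hβδ : β = δ := neg_injective hmem
        exact Or.inl (hβδ ▸ hδc)

end MatsumotoGraph

/-- An invertible root (i.e. both `α` and `-α` are roots), viewed as a point of the unit
sphere via normalization, is an isolated point of the set of normalized roots. -/
theorem invertible_root_isolated {d : ℕ} {M : Type*} [NormedAddCommGroup M]
    [NormedSpace ℝ M] (G : MatsumotoGraph d M) (hG : G.Axioms) (α : M)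
    (hα : α ∈ G.R) (hα' : -α ∈ G.R) :
    ∃ ε > (0 : ℝ), ∀ β ∈ G.R,
      ‖(‖β‖⁻¹ • β) - (‖α‖⁻¹ • α)‖ < ε → ‖β‖⁻¹ • β = ‖α‖⁻¹ • α := by
  classical
  -- α is a compact edge root: get an edge a → b with root α
  obtain ⟨a, b, hab⟩ : ∃ a b, G.adj a b α := by
    rcases hα with h | ⟨w, hw⟩
    · exact h
    · exact absurd hα' (hG.inf_noninv w α hw)
  have hba : G.adj b a (-α) := hG.adj_symm hab
  obtain ⟨i, hi⟩ := (hG.ingoing b α).mp (Or.inl ⟨a, hab⟩)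
  obtain ⟨j, hj⟩ := (hG.ingoing a (-α)).mp (Or.inl ⟨b, hba⟩)
  have hα0 : α ≠ 0 := by
    have h := (hG.basis_indep b).ne_zero i
    rw [← hi] at h; exact h
  have hαnorm : (0:ℝ) < ‖α‖ := norm_pos_iff.mpr hα0
  -- bases at b and at a
  let B' : Module.Basis (Fin d) ℝ M := Module.Basis.mk (hG.basis_indep b) (hG.basis_span b).ge
  let Bv : Module.Basis (Fin d) ℝ M := Module.Basis.mk (hG.basis_indep a) (hG.basis_span a).ge
  have hB' : ∀ k, B' k = G.basisAt b k := fun k => Module.Basis.mk_apply _ _ _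
  have hBv : ∀ k, Bv k = G.basisAt a k := fun k => Module.Basis.mk_apply _ _ _
  have : FiniteDimensional ℝ M := Module.Finite.of_basis B'
  -- the dual coordinate functionals
  let F : M →L[ℝ] ℝ := LinearMap.toContinuousLinearMap (B'.coord i)
  let Gf : M →L[ℝ] ℝ := LinearMap.toContinuousLinearMap (Bv.coord j)
  have hFcone : ∀ x, G.inCone b x → 0 ≤ F x := by
    rintro x ⟨c, hc, rfl⟩
    have hx : F (∑ k, c k • G.basisAt b k) = c i := by
      simp only [F, LinearMap.coe_toContinuousLinearMap']
      simp_rw [← hB']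
      simp [Module.Basis.coord_apply, Finsupp.single_apply]
    rw [hx]; exact hc i
  have hGcone : ∀ x, G.inCone a x → 0 ≤ Gf x := by
    rintro x ⟨c, hc, rfl⟩
    have hx : Gf (∑ k, c k • G.basisAt a k) = c j := by
      simp only [Gf, LinearMap.coe_toContinuousLinearMap']
      simp_rw [← hBv]
      simp [Module.Basis.coord_apply, Finsupp.single_apply]
    rw [hx]; exact hc j
  have hFα : F α = 1 := by
    have hα' : α = B' i := by rw [hB']; exact hi
    simp only [F, LinearMap.coe_toContinuousLinearMap', hα']
    simp [Module.Basis.coord_apply]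
  have hGα : Gf α = -1 := by
    have hα'' : -α = Bv j := by rw [hBv]; exact hj
    have h1 : Gf (-α) = 1 := by
      simp only [Gf, LinearMap.coe_toContinuousLinearMap', hα'']
      simp [Module.Basis.coord_apply]
    have := map_neg Gf α
    rw [h1] at this; linarith
  set s : ℝ := ‖F‖ + ‖Gf‖ + 1 with hs
  have hspos : (0:ℝ) < s := by positivity
  set ε : ℝ := ‖α‖⁻¹ / s with hε
  have hεpos : (0:ℝ) < ε := by positivity
  refine ⟨ε, hεpos, ?_⟩
  intro β hβR hclose
  by_contra hne
  have hβα : β ≠ α := fun h => hne (by rw [h])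
  set xhat : M := ‖α‖⁻¹ • α with hxhat
  set yhat : M := ‖β‖⁻¹ • β with hyhat
  -- the generic bound for both functionals
  have hbound : ∀ φ : M →L[ℝ] ℝ, ‖φ‖ ≤ ‖F‖ + ‖Gf‖ → |φ yhat - φ xhat| < ‖α‖⁻¹ := by
    intro φ hφ
    have h1 : |φ yhat - φ xhat| = ‖φ (yhat - xhat)‖ := by rw [map_sub]; exact (Real.norm_eq_abs _).symm
    have h2 : ‖φ (yhat - xhat)‖ ≤ ‖φ‖ * ‖yhat - xhat‖ := φ.le_opNorm _
    have h3 : ‖yhat - xhat‖ < ε := hclose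
    have h4 : (0:ℝ) ≤ ‖yhat - xhat‖ := norm_nonneg _
    have h5 : s * ε = ‖α‖⁻¹ := by
      rw [hε]; field_simp
    nlinarith [norm_nonneg φ]
  have hFval : F xhat = ‖α‖⁻¹ := by
    rw [hxhat, map_smul, hFα, smul_eq_mul, mul_one]
  have hGval : Gf xhat = -‖α‖⁻¹ := by
    rw [hxhat, map_smul, hGα, smul_eq_mul]; ring
  by_cases hpa : β ∈ G.pos a
  · -- β in the cone at a : use Gf
    have h0 : 0 ≤ Gf β := hGcone β hpa.2
    have h1 : 0 ≤ Gf yhat := by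
      rw [hyhat, map_smul, smul_eq_mul]
      exact mul_nonneg (inv_nonneg.mpr (norm_nonneg _)) h0
    have h2 := hbound Gf (le_add_of_nonneg_left (norm_nonneg _))
    rw [hGval] at h2
    have := le_abs_self (Gf yhat - -‖α‖⁻¹)
    have habs : |Gf yhat - -‖α‖⁻¹| < ‖α‖⁻¹ := h2
    have : (0:ℝ) < ‖α‖⁻¹ := by positivity
    linarith [le_abs_self (Gf yhat - -‖α‖⁻¹)]
  · -- β not positive at a, hence not at b, hence -β positive at b : use F
    have hpb : β ∉ G.pos b := by
      intro h
      have hmem : β ∈ G.pos b \ G.pos a := ⟨h, hpa⟩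
      rw [hG.step a b α hab] at hmem
      exact hβα hmem
    rcases MatsumotoGraph.pos_dichotomy hG hβR b with h | ⟨_, hnb⟩
    · exact hpb h
    · have h0 : 0 ≤ F (-β) := hFcone (-β) hnb.2
      have h0' : F β ≤ 0 := by rw [map_neg] at h0; linarith
      have h1 : F yhat ≤ 0 := by
        rw [hyhat, map_smul, smul_eq_mul]
        exact mul_nonpos_of_nonneg_of_nonpos (inv_nonneg.mpr (norm_nonneg _)) h0'
      have h2 := hbound F (le_add_of_nonneg_right (norm_nonneg _))
      rw [hFval] at h2
      have : (0:ℝ) < ‖α‖⁻¹ := by positivity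
      linarith [neg_abs_le (F yhat - ‖α‖⁻¹)]
end
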